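/- arXiv:1511.05088 — 12 statements merged into one kernel-verified Lean document; each statement's English description precedes it below -/
import Mathlib

section
/- Let G be a group equipped with a left-invariant linear order < that is Archimedean. Then < is also right-invariant: for all f, g, h ∈ G, g < h implies gf < hf (so < is a bi-ordering). -/
/-!
By left-invariance, `g < h` iff `1 < g⁻¹ * h`, so right-invariance amounts to the positive cone
being closed under conjugation. For `1 < a` and `1 < b`, if `b * a * b⁻¹ < 1` then
`1 < b * a⁻¹ * b⁻¹`, and the Archimedean property gives `b < (b * a⁻¹ * b⁻¹) ^ n = b * a⁻ⁿ * b⁻¹`;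
multiplying on the left by `aⁿ * b⁻¹` yields `aⁿ < b⁻¹ < 1`, which is absurd. Conjugation by a
negative `b` reduces to this case by swapping the roles of `a` and `b * a * b⁻¹` and inverting.
-/

section

variable {G : Type*} [Group G] {r : G → G → Prop}

def IsLeftInvariant (r : G → G → Prop) : Prop :=
  ∀ f g h : G, r g h → r (f * g) (f * h)

namespace IsLeftInvariant

theorem rel_iff_one_rel_inv_mul (hl : IsLeftInvariant r) {g h : G} :
    r g h ↔ r 1 (g⁻¹ * h) := by
  refine ⟨fun hgh => ?_, fun h1 => ?_⟩
  · simpa using hl g⁻¹ g h hgh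
  · simpa using hl g 1 (g⁻¹ * h) h1

theorem one_rel_inv_iff (hl : IsLeftInvariant r) {a : G} : r 1 a⁻¹ ↔ r a 1 := by
  simpa using (hl.rel_iff_one_rel_inv_mul (g := a) (h := 1)).symm

theorem one_rel_pow [IsTrans G r] (hl : IsLeftInvariant r) {a : G} (ha : r 1 a) {n : ℕ}
    (hn : n ≠ 0) : r 1 (a ^ n) := by
  obtain ⟨n, rfl⟩ := Nat.exists_eq_succ_of_ne_zero hn
  induction n with
  | zero => simpa using ha
  | succ n ih =>
    rw [pow_succ']
    exact trans_of r ha (by simpa using hl a 1 _ (ih n.succ_ne_zero))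

variable [IsStrictTotalOrder G r]

theorem one_rel_or_one_rel_inv (hl : IsLeftInvariant r) {a : G} (ha : a ≠ 1) :
    r 1 a ∨ r 1 a⁻¹ := by
  rw [hl.one_rel_inv_iff]
  rcases trichotomous_of r 1 a with h | h | h
  exacts [.inl h, absurd h.symm ha, .inr h]

theorem one_rel_conj_of_one_rel (hl : IsLeftInvariant r)
    (harch : ∀ g h : G, r 1 g → r 1 h → ∃ n : ℕ, r h (g ^ n)) {a b : G}
    (ha : r 1 a) (hb : r 1 b) : r 1 (b * a * b⁻¹) := by
  have ha₁ : a ≠ 1 := by rintro rfl; exact irrefl_of r 1 ha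
  refine (hl.one_rel_or_one_rel_inv (conj_eq_one_iff.not.mpr ha₁)).resolve_right fun hneg => ?_
  obtain ⟨n, hn⟩ : ∃ n : ℕ, r b ((b * a⁻¹ * b⁻¹) ^ n) :=
    harch _ b (by simpa [mul_assoc] using hneg) hb
  rw [conj_pow] at hn
  have hpow : r (a ^ n) b⁻¹ := by
    simpa [mul_assoc] using hl (a ^ n * b⁻¹) _ _ hn
  have hb' : r b⁻¹ 1 := by simpa using hl b⁻¹ 1 b hb
  rcases eq_or_ne n 0 with rfl | hn₀
  · exact asymm_of r hb (hl.one_rel_inv_iff.mp (by simpa using hpow))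
  · exact irrefl_of r 1 (trans_of r (hl.one_rel_pow ha hn₀) (trans_of r hpow hb'))

theorem one_rel_conj (hl : IsLeftInvariant r)
    (harch : ∀ g h : G, r 1 g → r 1 h → ∃ n : ℕ, r h (g ^ n)) {a : G} (ha : r 1 a) (b : G) :
    r 1 (b * a * b⁻¹) := by
  rcases eq_or_ne b 1 with rfl | hb₁
  · simpa using ha
  rcases hl.one_rel_or_one_rel_inv hb₁ with hb | hb
  · exact hl.one_rel_conj_of_one_rel harch ha hb
  have ha₁ : a ≠ 1 := by rintro rfl; exact irrefl_of r 1 ha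
  refine (hl.one_rel_or_one_rel_inv (conj_eq_one_iff.not.mpr ha₁)).resolve_right fun hneg => ?_
  have hinv : r 1 a⁻¹ := by
    simpa [mul_assoc] using hl.one_rel_conj_of_one_rel harch hneg hb
  exact asymm_of r ha (hl.one_rel_inv_iff.mp hinv)

end IsLeftInvariant

end

/-- An Archimedean left-invariant linear order on a group is also
right-invariant (hence a bi-ordering). -/
theorem archimedean_leftOrder_isBiOrder {G : Type*} [Group G] (r : G → G → Prop)
    (hord : IsStrictTotalOrder G r)
    (hleft : ∀ f g h : G, r g h → r (f * g) (f * h))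
    (harch : ∀ g h : G, r 1 g → r 1 h → ∃ n : ℕ, r h (g ^ n)) :
    ∀ f g h : G, r g h → r (g * f) (h * f) := by
  have hl : IsLeftInvariant r := hleft
  intro f g h hgh
  rw [hl.rel_iff_one_rel_inv_mul] at hgh ⊢
  simpa [mul_assoc] using hl.one_rel_conj harch hgh f⁻¹
end

section
/- (Hölder's theorem) Let G be a group equipped with an Archimedean left-invariant linear order <. Then there exists a map φ : G → ℝ satisfying φ(gh) = φ(g) + φ(h) for all g, h ∈ G, which is injective and strictly order-preserving (g < h implies φ(g) < φ(h)); in particular G is isomorphic, as an ordered group, to a subgroup of the additive reals with its usual order. -/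
/-!
An Archimedean left-ordering is automatically bi-invariant: if conjugating a positive `x` by a
positive `c` gave `c⁻¹ x c ≤ 1`, then `x ^ n * c ≤ c` for every `n`, contradicting `c < x ^ n`.
A bi-ordered Archimedean group is abelian: either it has a least positive element, and then it
is cyclic, or every positive element `c` dominates a square `h * h` of a positive `h`; trapping
`x` and `y` between consecutive powers of `h` traps every commutator below `h * h`, so no
commutator can be positive. For abelian Archimedean groups the embedding into `ℝ` is
`Archimedean.exists_orderAddMonoidHom_real_injective`.
-/

open scoped commutatorElement

attribute [local instance] mulLeftMono_of_mulLeftStrictMono mulRightMono_of_mulRightStrictMono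

/-- Mathlib's `MulArchimedean` presupposes a commutative monoid; this variant does not. -/
def IsMulArchimedean (G : Type*) [Monoid G] [LT G] : Prop :=
  ∀ g h : G, 1 < g → 1 < h → ∃ n : ℕ, h < g ^ n

section Ordered

variable {G : Type*} [Group G] [LinearOrder G]

theorem IsMulArchimedean.exists_lt_pow (harch : IsMulArchimedean G) {z : G} (hz : 1 < z)
    (u : G) : ∃ n : ℕ, u < z ^ n := by
  rcases lt_or_ge 1 u with hu | hu
  · exact harch z u hz hu
  · exact ⟨1, (pow_one z).symm ▸ hu.trans_lt hz⟩

section LeftOrdered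

variable [MulLeftStrictMono G]

theorem Left.zpow_right_strictMono {a : G} (ha : 1 < a) : StrictMono fun n : ℤ ↦ a ^ n :=
  strictMono_int_of_lt_succ fun n ↦ by
    rw [zpow_add_one]
    exact lt_mul_of_one_lt_right' (a ^ n) ha

theorem IsMulArchimedean.one_lt_conj_of_one_lt (harch : IsMulArchimedean G) {x c : G}
    (hx : 1 < x) (hc : 1 < c) : 1 < c⁻¹ * x * c := by
  by_contra! hle
  have hxc : x * c ≤ c := by simpa [mul_assoc] using mul_le_mul_right hle c
  have hpow : ∀ n : ℕ, x ^ n * c ≤ c := by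
    intro n
    induction n with
    | zero => simp
    | succ n ih =>
      calc x ^ (n + 1) * c = x ^ n * (x * c) := by rw [pow_succ, mul_assoc]
        _ ≤ x ^ n * c := mul_le_mul_right hxc _
        _ ≤ c := ih
  obtain ⟨n, hn⟩ := harch x c hx hc
  exact (hn.trans (lt_mul_of_one_lt_right' _ hc)).not_ge (hpow n)

theorem IsMulArchimedean.one_lt_conj (harch : IsMulArchimedean G) {x : G} (hx : 1 < x)
    (c : G) : 1 < c⁻¹ * x * c := by
  rcases lt_trichotomy 1 c with hc | rfl | hc
  · exact harch.one_lt_conj_of_one_lt hx hc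
  · simpa using hx
  · by_contra! hle
    have hne : c⁻¹ * x * c ≠ 1 := by
      intro h
      have hx' : x = c * (c⁻¹ * x * c) * c⁻¹ := by group
      rw [h, mul_one, mul_inv_cancel] at hx'
      exact hx.ne' hx'
    -- conjugating the positive `(c⁻¹ x c)⁻¹` back by the positive `c⁻¹` would make `x⁻¹` positive
    have hy : 1 < (c⁻¹ * x * c)⁻¹ := Left.one_lt_inv_iff.mpr (hle.lt_of_ne hne)
    have h := harch.one_lt_conj_of_one_lt hy (Left.one_lt_inv_iff.mpr hc)
    have hx' : c⁻¹⁻¹ * (c⁻¹ * x * c)⁻¹ * c⁻¹ = x⁻¹ := by group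
    exact (Left.inv_lt_one_iff.mpr hx).not_gt (hx' ▸ h)

theorem IsMulArchimedean.mulRightStrictMono (harch : IsMulArchimedean G) :
    MulRightStrictMono G := by
  refine ⟨fun c a b hab ↦ ?_⟩
  have h := harch.one_lt_conj (lt_inv_mul_iff_lt.mpr hab) c
  have e : c⁻¹ * (a⁻¹ * b) * c = (a * c)⁻¹ * (b * c) := by group
  exact lt_inv_mul_iff_lt.mp (e ▸ h)

section BiOrdered

variable [MulRightStrictMono G]

theorem IsMulArchimedean.exists_zpow_le_and_lt_zpow_add_one (harch : IsMulArchimedean G)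
    {z : G} (hz : 1 < z) (u : G) : ∃ k : ℤ, z ^ k ≤ u ∧ u < z ^ (k + 1) := by
  have hmono := Left.zpow_right_strictMono hz
  obtain ⟨n, hn⟩ := harch.exists_lt_pow hz u
  obtain ⟨m, hm⟩ := harch.exists_lt_pow hz u⁻¹
  obtain ⟨k, hk, hmax⟩ := Int.exists_greatest_of_bdd (P := fun k ↦ z ^ k ≤ u)
    ⟨n, fun k hk ↦ (hmono.lt_iff_lt.mp (hk.trans_lt (by simpa using hn))).le⟩
    ⟨-m, by simpa using (inv_lt'.mp hm).le⟩
  exact ⟨k, hk, lt_of_not_ge fun h ↦ (hmax _ h).not_gt (lt_add_one k)⟩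

theorem IsMulArchimedean.exists_eq_zpow_of_isLeast (harch : IsMulArchimedean G) {e : G}
    (he : IsLeast {g | 1 < g} e) (u : G) : ∃ k : ℤ, u = e ^ k := by
  obtain ⟨k, hle, hlt⟩ := harch.exists_zpow_le_and_lt_zpow_add_one he.1 u
  refine ⟨k, ?_⟩
  have h1 : 1 ≤ e ^ (-k) * u := by simpa [zpow_neg] using mul_le_mul_right hle (e ^ k)⁻¹
  have h2 : e ^ (-k) * u < e := by
    simpa [zpow_neg, zpow_add_one, mul_assoc] using mul_lt_mul_right hlt (e ^ k)⁻¹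
  have h3 : e ^ (-k) * u = 1 := h1.eq_or_lt.elim Eq.symm fun h ↦ absurd (he.2 h) h2.not_ge
  exact (inv_mul_eq_one.mp (by rwa [zpow_neg] at h3)).symm

theorem exists_one_lt_mul_self_le (hdense : ∀ e : G, 1 < e → ∃ g, 1 < g ∧ g < e)
    {c : G} (hc : 1 < c) : ∃ h : G, 1 < h ∧ h * h ≤ c := by
  obtain ⟨a, ha, hac⟩ := hdense c hc
  rcases le_or_gt (a * a) c with haa | haa
  · exact ⟨a, ha, haa⟩
  · refine ⟨c * a⁻¹, lt_mul_inv_iff_lt.mpr hac, ?_⟩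
    calc c * a⁻¹ * (c * a⁻¹) ≤ c * a⁻¹ * a :=
          mul_le_mul_right (mul_inv_lt_iff_lt_mul.mpr haa).le _
      _ = c := inv_mul_cancel_right c a

theorem IsMulArchimedean.commutatorElement_le_one (harch : IsMulArchimedean G)
    (hdense : ∀ e : G, 1 < e → ∃ g, 1 < g ∧ g < e) (x y : G) : ⁅x, y⁆ ≤ 1 := by
  by_contra! hc
  obtain ⟨h, h1, hh⟩ := exists_one_lt_mul_self_le hdense hc
  obtain ⟨m, hxm, hxm'⟩ := harch.exists_zpow_le_and_lt_zpow_add_one h1 x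
  obtain ⟨n, hyn, hyn'⟩ := harch.exists_zpow_le_and_lt_zpow_add_one h1 y
  have hlt : ⁅x, y⁆ < h ^ (m + 1) * h ^ (n + 1) * h ^ (-m) * h ^ (-n) := by
    rw [commutatorElement_def]
    refine mul_lt_mul_of_lt_of_le
      (mul_lt_mul_of_lt_of_le (mul_lt_mul_of_lt_of_le hxm' hyn'.le) ?_) ?_
    · simpa [zpow_neg] using hxm
    · simpa [zpow_neg] using hyn
  have e : h ^ (m + 1) * h ^ (n + 1) * h ^ (-m) * h ^ (-n) = h * h := by
    rw [← pow_two]; group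
  exact (hlt.trans_le (e ▸ hh)).false

theorem IsMulArchimedean.mul_comm (harch : IsMulArchimedean G) (x y : G) :
    x * y = y * x := by
  by_cases hmin : ∃ e, IsLeast {g : G | 1 < g} e
  · obtain ⟨e, he⟩ := hmin
    obtain ⟨k, rfl⟩ := harch.exists_eq_zpow_of_isLeast he x
    obtain ⟨l, rfl⟩ := harch.exists_eq_zpow_of_isLeast he y
    exact Commute.zpow_zpow_self e k l
  · have hdense : ∀ e : G, 1 < e → ∃ g, 1 < g ∧ g < e := by
      intro e he
      by_contra! h
      exact hmin ⟨e, he, fun g hg ↦ h g hg⟩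
    refine commutatorElement_eq_one_iff_commute.mp
      (le_antisymm (harch.commutatorElement_le_one hdense x y) ?_)
    rw [← inv_le_inv_iff, inv_one, commutatorElement_inv]
    exact harch.commutatorElement_le_one hdense y x

end BiOrdered

theorem IsMulArchimedean.exists_add_strictMono_real (harch : IsMulArchimedean G) :
    ∃ φ : G → ℝ, (∀ g h : G, φ (g * h) = φ g + φ h) ∧ StrictMono φ := by
  have := harch.mulRightStrictMono
  let _ : CommGroup G := { mul_comm := harch.mul_comm }
  have : IsOrderedMonoid G :=
    ⟨fun _ _ hab c ↦ mul_le_mul_left hab c, fun _ _ hab c ↦ mul_le_mul_right hab c⟩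
  have : MulArchimedean G := ⟨fun x _ hy ↦ (harch.exists_lt_pow hy x).imp fun _ ↦ le_of_lt⟩
  obtain ⟨f, hf⟩ := Archimedean.exists_orderAddMonoidHom_real_injective (Additive G)
  exact ⟨fun g ↦ f (Additive.ofMul g), fun g h ↦ map_add f _ _,
    fun g h hgh ↦ f.monotone'.strictMono_of_injective hf (Additive.ofMul_lt.mpr hgh)⟩

end LeftOrdered

end Ordered

/-- Hölder's theorem: a group with an Archimedean left-invariant
linear order embeds, in an order-preserving way, into the additive reals. -/
theorem holder_theorem {G : Type*} [Group G] (r : G → G → Prop)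
    (hord : IsStrictTotalOrder G r)
    (hleft : ∀ f g h : G, r g h → r (f * g) (f * h))
    (harch : ∀ g h : G, r 1 g → r 1 h → ∃ n : ℕ, r h (g ^ n)) :
    ∃ φ : G → ℝ, (∀ g h : G, φ (g * h) = φ g + φ h) ∧
      Function.Injective φ ∧ ∀ g h : G, r g h → φ g < φ h := by
  classical
  let _ : LinearOrder G := linearOrderOfSTO r
  have : MulLeftStrictMono G := ⟨fun f _ _ ↦ hleft f _ _⟩
  obtain ⟨φ, hadd, hmono⟩ := IsMulArchimedean.exists_add_strictMono_real harch
  exact ⟨φ, hadd, hmono.injective, fun _ _ ↦ @hmono _ _⟩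
end

section
/- A group G is left-orderable if and only if every finitely generated subgroup of G is left-orderable. -/
/-!
The forward direction restricts an order to a subgroup. For the converse, choose a left order
on the subgroup generated by each finite subset `S` of `G` and take its limit along an
ultrafilter `U` on the finite subsets that refines `atTop`: `g < h` iff `g < h` in the chosen orders
for `U`-almost all `S`. Each axiom of a left order only involves finitely many elements, all of
which lie in the subgroup generated by `S` for almost all `S`, and the ultrafilter decides
between `g < h` and `h < g`.
-/

/-- A group is left-orderable if it admits a strict linear order invariant under
left multiplication. -/
def LeftOrderable (G : Type*) [Group G] : Prop :=
  ∃ r : G → G → Prop, IsStrictTotalOrder G r ∧ ∀ f g h : G, r g h → r (f * g) (f * h)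

open Filter

theorem LeftOrderable.of_injective {H G : Type*} [Group H] [Group G] {φ : H →* G}
    (hφ : Function.Injective φ) (hG : LeftOrderable G) : LeftOrderable H := by
  obtain ⟨r, hr, hinv⟩ := hG
  exact ⟨Function.onFun r φ, hφ.isStrictTotalOrder_onFun (r := r), fun f g h hgh => by
    simpa only [Function.onFun, map_mul] using hinv (φ f) (φ g) (φ h) hgh⟩

theorem LeftOrderable.subgroup {G : Type*} [Group G] (hG : LeftOrderable G) (H : Subgroup G) :
    LeftOrderable H :=
  hG.of_injective H.subtype_injective

theorem Ultrafilter.isStrictTotalOrder_eventually {ι α : Type*} (U : Ultrafilter ι)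
    {r : ι → α → α → Prop}
    (irrefl : ∀ a, ∀ᶠ i in U, ¬ r i a a)
    (trans : ∀ a b c, ∀ᶠ i in U, r i a b → r i b c → r i a c)
    (total : ∀ a b, a ≠ b → ∀ᶠ i in U, r i a b ∨ r i b a) :
    IsStrictTotalOrder α fun a b => ∀ᶠ i in U, r i a b where
  irrefl a h := by
    obtain ⟨i, hi, hirr⟩ := (h.and (irrefl a)).exists
    exact hirr hi
  trans a b c hab hbc := by
    filter_upwards [hab, hbc, trans a b c] with i hab hbc htrans using htrans hab hbc
  trichotomous a b hab hba := by
    by_contra hne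
    exact (Ultrafilter.eventually_or.1 (total a b hne)).elim hab hba

namespace Subgroup

variable {G : Type*} [Group G] (H : Subgroup G) (r : H → H → Prop)

def extendRel (g h : G) : Prop :=
  ∃ (hg : g ∈ H) (hh : h ∈ H), r ⟨g, hg⟩ ⟨h, hh⟩

variable {H r}

theorem not_extendRel_self [Std.Irrefl r] (g : G) : ¬ H.extendRel r g g :=
  fun ⟨_, _, hgg⟩ => irrefl _ hgg

theorem extendRel_trans [IsTrans H r] {a b c : G} :
    H.extendRel r a b → H.extendRel r b c → H.extendRel r a c :=
  fun ⟨ha, _, hab⟩ ⟨_, hc, hbc⟩ => ⟨ha, hc, _root_.trans hab hbc⟩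

theorem extendRel_or_extendRel [Std.Trichotomous r] {a b : G} (ha : a ∈ H) (hb : b ∈ H)
    (hne : a ≠ b) : H.extendRel r a b ∨ H.extendRel r b a := by
  by_contra! h
  exact hne (congrArg Subtype.val (Std.Trichotomous.trichotomous (r := r) ⟨a, ha⟩ ⟨b, hb⟩
    (fun hab => h.1 ⟨ha, hb, hab⟩) (fun hba => h.2 ⟨hb, ha, hba⟩)))

theorem extendRel_mul_left (hinv : ∀ f g h : H, r g h → r (f * g) (f * h)) {f g h : G}
    (hf : f ∈ H) : H.extendRel r g h → H.extendRel r (f * g) (f * h) :=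
  fun ⟨hg, hh, hgh⟩ => ⟨mul_mem hf hg, mul_mem hf hh, hinv ⟨f, hf⟩ _ _ hgh⟩

end Subgroup

theorem LeftOrderable.of_forall_finset {G : Type*} [Group G]
    (h : ∀ S : Finset G, LeftOrderable (Subgroup.closure (S : Set G))) : LeftOrderable G := by
  choose r hr hinv using h
  let U : Ultrafilter (Finset G) := .of atTop
  have mem_closure (g : G) : ∀ᶠ S : Finset G in U, g ∈ Subgroup.closure (S : Set G) :=
    Ultrafilter.of_le atTop <| (eventually_ge_atTop {g}).mono fun S hS =>
      Subgroup.subset_closure (hS (Finset.mem_singleton_self g))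
  let q (S : Finset G) := (Subgroup.closure (S : Set G)).extendRel (r S)
  refine ⟨fun a b => ∀ᶠ S in U, q S a b, U.isStrictTotalOrder_eventually
    (fun a => .of_forall fun S => Subgroup.not_extendRel_self a)
    (fun a b c => .of_forall fun S => Subgroup.extendRel_trans)
    (fun a b hne => by
      filter_upwards [mem_closure a, mem_closure b] with S ha hb
      exact Subgroup.extendRel_or_extendRel ha hb hne), ?_⟩
  intro f g h hgh
  filter_upwards [mem_closure f, hgh] with S hf hS
  exact Subgroup.extendRel_mul_left (hinv S) hf hS

/-- A group is left-orderable iff all of its finitely generated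
subgroups are left-orderable. -/
theorem leftOrderable_iff_fg_subgroups {G : Type*} [Group G] :
    LeftOrderable G ↔ ∀ H : Subgroup G, H.FG → LeftOrderable H :=
  ⟨fun hG H _ => hG.subgroup H, fun h => .of_forall_finset fun S => h _ ⟨S, rfl⟩⟩
end

section
/- (Conrad's criterion) A group G is left-orderable if and only if for every finite subset {x₁, …, xₙ} of G not containing the identity element, there exist signs ε₁, …, εₙ ∈ {+1, −1} such that the identity element of G does not belong to the subsemigroup of G generated by {x₁^{ε₁}, …, xₙ^{εₙ}} (the set of all nonempty products of these elements, inverses not allowed). -/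
theorem exists_forall_of_forall_finset_exists {ι β : Type*} [Finite β]
    (p : Finset ι → (ι → β) → Prop)
    (hlocal : ∀ s σ τ, (∀ i ∈ s, σ i = τ i) → p s σ → p s τ)
    (hanti : ∀ s t, s ⊆ t → ∀ σ, p t σ → p s σ)
    (hex : ∀ s, ∃ σ, p s σ) : ∃ σ, ∀ s, p s σ := by
  let _ : TopologicalSpace β := ⊥
  have _ : DiscreteTopology β := ⟨rfl⟩
  -- `p s` only sees the restriction to `s`, which is a continuous map to a discrete space
  have hclosed : ∀ s, IsClosed {σ | p s σ} := fun s => by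
    have : {σ | p s σ} = s.restrict ⁻¹' (s.restrict '' {σ | p s σ}) := by
      refine (Set.subset_preimage_image _ _).antisymm ?_
      rintro τ ⟨σ, hσ, hστ⟩
      exact hlocal s σ τ (fun i hi => congrFun hστ ⟨i, hi⟩) hσ
    rw [this]
    exact (isClosed_discrete _).preimage (Finset.continuous_restrict s)
  have hdir : Directed (· ⊇ ·) fun s => {σ | p s σ} :=
    Antitone.directed_ge fun s t hst σ => hanti s t hst σ
  obtain ⟨σ, hσ⟩ := IsCompact.nonempty_iInter_of_directed_nonempty_isCompact_isClosed _ hdir hex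
    (fun s => (hclosed s).isCompact) hclosed
  exact ⟨σ, Set.mem_iInter.1 hσ⟩

theorem Subsemigroup.exists_finset_subset_of_mem_closure {M : Type*} [Mul M] {S : Set M} {a : M}
    (h : a ∈ closure S) : ∃ t : Finset M, ↑t ⊆ S ∧ a ∈ closure (t : Set M) := by
  classical
  induction h using closure_induction with
  | mem x hx => exact ⟨{x}, by simpa using hx, subset_closure (by simp)⟩
  | mul x y _ _ hx hy =>
    obtain ⟨t, hts, hxt⟩ := hx
    obtain ⟨u, hus, hyu⟩ := hy
    refine ⟨t ∪ u, by simpa using And.intro hts hus, mul_mem ?_ ?_⟩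
    · exact closure_mono (by simp) hxt
    · exact closure_mono (by simp) hyu

structure Subsemigroup.IsPositiveCone {G : Type*} [Group G] (P : Subsemigroup G) : Prop where
  one_notMem : (1 : G) ∉ P
  mem_or_inv_mem {x : G} : x ≠ 1 → x ∈ P ∨ x⁻¹ ∈ P

section

variable {G : Type*} [Group G]

theorem LeftOrderable.exists_isPositiveCone (h : LeftOrderable G) :
    ∃ P : Subsemigroup G, P.IsPositiveCone := by
  obtain ⟨r, hr, hmul⟩ := h
  refine ⟨⟨{y | r 1 y}, fun {a b} ha hb => ?_⟩, ⟨hr.irrefl 1, fun {x} hx => ?_⟩⟩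
  · simpa using hr.trans _ _ _ ha (by simpa using hmul a 1 b hb)
  · refine or_iff_not_imp_left.2 fun hx1 => ?_
    have hlt : r x 1 := by_contra fun hgt => hx (hr.trichotomous 1 x hx1 hgt).symm
    simpa using hmul x⁻¹ x 1 hlt

theorem Subsemigroup.IsPositiveCone.leftOrderable {P : Subsemigroup G} (hP : P.IsPositiveCone) :
    LeftOrderable G := by
  refine ⟨fun g h => g⁻¹ * h ∈ P, ?_, fun f g h hgh => by simpa [mul_assoc] using hgh⟩
  have : IsStrictOrder G fun g h => g⁻¹ * h ∈ P :=
    { irrefl g hg := hP.one_notMem (by simpa using hg)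
      trans a b c hab hbc := by simpa [mul_assoc] using mul_mem hab hbc }
  refine { trichotomous g h hgh hhg := ?_ }
  by_contra hne
  rcases hP.mem_or_inv_mem (x := g⁻¹ * h) (by simpa [inv_mul_eq_one] using hne) with h' | h'
  · exact hgh h'
  · exact hhg (by simpa using h')

theorem leftOrderable_iff_exists_isPositiveCone :
    LeftOrderable G ↔ ∃ P : Subsemigroup G, P.IsPositiveCone :=
  ⟨LeftOrderable.exists_isPositiveCone, fun ⟨_, hP⟩ => hP.leftOrderable⟩

theorem Subsemigroup.IsPositiveCone.exists_signs {P : Subsemigroup G} (hP : P.IsPositiveCone)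
    {S : Set G} (hS : (1 : G) ∉ S) :
    ∃ ε : G → ℤ, (∀ x ∈ S, ε x = 1 ∨ ε x = -1) ∧
      (1 : G) ∉ Subsemigroup.closure ((fun x => x ^ ε x) '' S) := by
  classical
  refine ⟨fun x => if x ∈ P then 1 else -1, fun x _ => by by_cases hx : x ∈ P <;> simp [hx],
    fun h1 => ?_⟩
  refine hP.one_notMem (Subsemigroup.closure_le.2 ?_ h1)
  rintro _ ⟨x, hx, rfl⟩
  by_cases hxP : x ∈ P
  · simp [hxP]
  · simpa [hxP] using (hP.mem_or_inv_mem (ne_of_mem_of_not_mem hx hS)).resolve_left hxP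

theorem exists_isPositiveCone_of_forall_finset_exists_signs
    (H : ∀ s : Finset G, (1 : G) ∉ s → ∃ ε : G → ℤ, (∀ x ∈ s, ε x = 1 ∨ ε x = -1) ∧
      (1 : G) ∉ Subsemigroup.closure ((fun x => x ^ ε x) '' ↑s)) :
    ∃ P : Subsemigroup G, P.IsPositiveCone := by
  classical
  -- erasing `1` lets the condition be imposed on every finite set, a directed family
  let p (s : Finset G) (ε : G → ℤˣ) : Prop :=
    (1 : G) ∉ Subsemigroup.closure ((fun x => x ^ (ε x : ℤ)) '' ↑(s.erase 1))
  have hex : ∀ s, ∃ ε, p s ε := fun s => by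
    obtain ⟨ε, hε, h1⟩ := H (s.erase 1) (Finset.notMem_erase 1 s)
    refine ⟨fun x => if ε x = 1 then 1 else -1, ?_⟩
    have hsigns : Set.EqOn (fun x => x ^ ((if ε x = 1 then 1 else -1 : ℤˣ) : ℤ))
        (fun x => x ^ ε x) ↑(s.erase 1) := fun x hx => by
      rcases hε x hx with h | h <;> simp [h]
    simpa only [p, hsigns.image_eq] using h1
  obtain ⟨ε, hε⟩ := exists_forall_of_forall_finset_exists p
    (fun s σ τ hστ hσ => by
      have hpow : Set.EqOn (fun x => x ^ (σ x : ℤ)) (fun x => x ^ (τ x : ℤ)) ↑(s.erase 1) :=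
        fun x hx => by simp only [hστ x (Finset.mem_of_mem_erase hx)]
      simpa only [p, hpow.image_eq] using hσ)
    (fun s t hst σ hσ h1 => hσ <| Subsemigroup.closure_mono
      (Set.image_mono (Finset.coe_subset.2 (Finset.erase_subset_erase 1 hst))) h1)
    hex
  refine ⟨Subsemigroup.closure ((fun x => x ^ (ε x : ℤ)) '' {x | x ≠ 1}), fun h1 => ?_,
    fun {x} hx => ?_⟩
  · obtain ⟨t, ht, h1t⟩ := Subsemigroup.exists_finset_subset_of_mem_closure h1
    obtain ⟨s, hs, rfl⟩ := Finset.subset_set_image_iff.1 ht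
    refine hε s ?_
    rwa [Finset.erase_eq_of_notMem fun h => hs h rfl, ← Finset.coe_image]
  · have hmem := Subsemigroup.subset_closure
      (Set.mem_image_of_mem (fun x => x ^ (ε x : ℤ)) (show x ∈ {x | x ≠ 1} from hx))
    rcases Int.units_eq_one_or (ε x) with h | h
    · left; simpa [h] using hmem
    · right; simpa [h] using hmem
end

/-- Conrad's criterion: a group `G` is left-orderable iff for every
finite subset of `G` not containing `1` there is a choice of signs `ε i = ±1`
such that `1` is not in the subsemigroup generated by the elements `xᵢ ^ (ε i)`. -/
theorem leftOrderable_iff_conrad_criterion {G : Type*} [Group G] :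
    LeftOrderable G ↔
      ∀ s : Finset G, (1 : G) ∉ s →
        ∃ ε : G → ℤ, (∀ x ∈ s, ε x = 1 ∨ ε x = -1) ∧
          (1 : G) ∉ Subsemigroup.closure ((fun x => x ^ ε x) '' ↑s) := by
  rw [leftOrderable_iff_exists_isPositiveCone]
  exact ⟨fun ⟨_, hP⟩ s hs => hP.exists_signs (Finset.mem_coe.not.2 hs),
    exists_isPositiveCone_of_forall_finset_exists_signs⟩
end

section
/- Let R be a nontrivial ring (with identity) having no zero divisors, and let G be a left-orderable group. Then the group ring R[G] has no zero divisors, and every unit of R[G] is trivial: if u ∈ R[G] is invertible then u = r·g for some unit r of R and some g ∈ G (i.e. u is supported on a single group element with invertible coefficient). -/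
/-!
In a left-ordered group, among the products `a * b` with `a ∈ A`, `b ∈ B` of two finite sets,
the largest and the smallest are each obtained in exactly one way, and they differ as soon as
`1 < #A * #B`. The coefficient of such a uniquely obtained product in `x * y ∈ R[G]` is a product
of two nonzero coefficients, so `R[G]` has no zero divisors, and `x * y` has at least two monomials
whenever `x` or `y` has. Hence the factors of `1` are monomials `r·a`, `s·b`, and
`(r·a)(s·b) = 1 = (s·b)(r·a)` makes `r` a unit.
-/
open Finset

theorem LeftOrderable.twoUniqueProds {G : Type*} [Group G] (hG : LeftOrderable G) :
    TwoUniqueProds G := by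
  classical
  obtain ⟨r, hr, hmono⟩ := hG
  let : LinearOrder G := linearOrderOfSTO r
  have : MulLeftStrictMono G := ⟨fun f _ _ hgh ↦ hmono f _ _ hgh⟩
  exact TwoUniqueProds.of_covariant_right

namespace MonoidAlgebra

variable {R G : Type*}

theorem one_lt_card_support_mul [Semiring R] [NoZeroDivisors R] [Mul G] [TwoUniqueProds G]
    {f g : MonoidAlgebra R G} (h : 1 < #f.coeff.support * #g.coeff.support) :
    1 < #(f * g).coeff.support := by
  obtain ⟨p, hp, q, hq, hpq, hpu, hqu⟩ := TwoUniqueProds.uniqueMul_of_one_lt_card h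
  rw [mem_product] at hp hq
  have mem_support {a b : G} (hab : UniqueMul f.coeff.support g.coeff.support a b)
      (ha : a ∈ f.coeff.support) (hb : b ∈ g.coeff.support) :
      a * b ∈ (f * g).coeff.support := by
    rw [Finsupp.mem_support_iff, coeff_mul_mul_of_uniqueMul hab]
    exact mul_ne_zero (Finsupp.mem_support_iff.mp ha) (Finsupp.mem_support_iff.mp hb)
  refine one_lt_card.mpr ⟨_, mem_support hpu hp.1 hp.2, _, mem_support hqu hq.1 hq.2, ?_⟩
  intro he
  obtain ⟨h₁, h₂⟩ := hpu hq.1 hq.2 he.symm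
  exact hpq (Prod.ext h₁.symm h₂.symm)

theorem exists_eq_single_of_mul_eq_one [Semiring R] [Nontrivial R] [NoZeroDivisors R]
    [Monoid G] [TwoUniqueProds G] {f g : MonoidAlgebra R G} (h : f * g = 1) :
    ∃ a r, f = single a r := by
  have card_pos {x : MonoidAlgebra R G} (hx : x ≠ 0) : 0 < #x.coeff.support :=
    card_pos.mpr (Finsupp.support_nonempty_iff.mpr (coeff_eq_zero.not.mpr hx))
  have hf := card_pos (left_ne_zero_of_mul_eq_one h)
  have hg := card_pos (right_ne_zero_of_mul_eq_one h)
  have hfg : #f.coeff.support * #g.coeff.support ≤ 1 := by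
    by_contra! hlt
    have := one_lt_card_support_mul hlt
    rw [h, one_def, coeff_single, Finsupp.support_single _ one_ne_zero, card_singleton] at this
    exact this.false
  have hf1 : #f.coeff.support = 1 := by nlinarith
  obtain ⟨a, r, -, hfa⟩ := Finsupp.card_support_eq_one'.mp hf1
  exact ⟨a, r, coeff_injective hfa⟩

theorem exists_eq_single_unit [Ring R] [Nontrivial R] [NoZeroDivisors R]
    [Group G] [TwoUniqueProds G] (u : (MonoidAlgebra R G)ˣ) :
    ∃ (r : Rˣ) (g : G), (u : MonoidAlgebra R G) = single g (r : R) := by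
  obtain ⟨a, r, hu⟩ := exists_eq_single_of_mul_eq_one u.mul_inv
  obtain ⟨b, s, hv⟩ := exists_eq_single_of_mul_eq_one u.inv_mul
  have eq_one_of_single_eq_one {c : G} {t : R} (ht : single c t = 1) : t = 1 := by
    rw [one_def, single_inj] at ht
    exact ht.elim And.right fun h ↦ absurd h.2 one_ne_zero
  have hrs := u.mul_inv
  have hsr := u.inv_mul
  rw [hu, hv, single_mul_single] at hrs hsr
  exact ⟨⟨r, s, eq_one_of_single_eq_one hrs, eq_one_of_single_eq_one hsr⟩, a, hu⟩

end MonoidAlgebra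

/-- If `R` is a nontrivial ring without zero divisors and `G` is a
left-orderable group, then the group ring `R[G]` has no zero divisors and all
of its units are trivial, i.e. of the form `r·g` with `r` a unit of `R`. -/
theorem groupRing_no_zeroDivisors_and_trivial_units
    {R : Type*} [Ring R] [Nontrivial R] [NoZeroDivisors R]
    {G : Type*} [Group G] (hG : LeftOrderable G) :
    (∀ x y : MonoidAlgebra R G, x * y = 0 → x = 0 ∨ y = 0) ∧
      ∀ u : (MonoidAlgebra R G)ˣ, ∃ (r : Rˣ) (g : G),
        (u : MonoidAlgebra R G) = MonoidAlgebra.single g (r : R) := by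
  have := hG.twoUniqueProds
  exact ⟨fun _ _ ↦ mul_eq_zero.mp, MonoidAlgebra.exists_eq_single_unit⟩
end

section
/- (Levi) If G is a nontrivial finitely generated bi-orderable group, then there is a surjective group homomorphism from G onto the integers ℤ. -/
/-!
Convex subgroups of a bi-ordered group form a chain, so when `G` is finitely generated the union
`C` of all proper convex subgroups is again proper; it is normal because conjugation preserves the
order. The order descends to `G ⧸ C`, and as every convex subgroup not contained in `C` is all of
`G`, the quotient is archimedean. An archimedean bi-ordered group is abelian (Hölder): a positive
commutator `z` satisfies `z < ε ^ 2` for every `ε > 1`; but if some `ε` lies strictly between `1`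
and `z`, then `ε` or `ε⁻¹ * z` squares to at most `z`, and if none does, `z` generates the group.
Being ordered, `G ⧸ C` is torsion-free, hence a nontrivial free abelian group of finite rank, which
maps onto `ℤ`.
-/

def BiOrderable (G : Type*) [Group G] : Prop :=
  ∃ r : G → G → Prop, IsStrictTotalOrder G r ∧
    (∀ f g h : G, r g h → r (f * g) (f * h)) ∧
    (∀ f g h : G, r g h → r (g * f) (h * f))

open Function Set
open scoped commutatorElement

theorem zpow_right_strictMono_of_one_lt {G : Type*} [Group G] [Preorder G] [MulLeftStrictMono G]
    {ε : G} (hε : 1 < ε) : StrictMono fun n : ℤ ↦ ε ^ n :=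
  strictMono_int_of_lt_succ fun n ↦ by
    rw [zpow_add_one]
    exact lt_mul_of_one_lt_right' _ hε

section Holder

variable {G : Type*} [Group G] [LinearOrder G] [MulLeftMono G] [MulRightMono G]

theorem exists_zpow_le_lt (harch : ∀ x y : G, 1 < x → ∃ n : ℕ, y ≤ x ^ n) {ε : G} (hε : 1 < ε)
    (g : G) : ∃ m : ℤ, ε ^ m ≤ g ∧ g < ε ^ (m + 1) := by
  obtain ⟨n₁, hn₁⟩ := harch ε g hε
  obtain ⟨n₂, hn₂⟩ := harch ε g⁻¹ hε
  have hbdd : ∃ b : ℤ, ∀ m : ℤ, ε ^ m ≤ g → m ≤ b := ⟨n₁, fun m hm ↦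
    (zpow_right_strictMono_of_one_lt hε).le_iff_le.1 (by simpa using hm.trans hn₁)⟩
  have hlow : ε ^ (-n₂ : ℤ) ≤ g := by simpa using inv_le_of_inv_le' hn₂
  obtain ⟨m, hm, hmax⟩ := Int.exists_greatest_of_bdd hbdd ⟨_, hlow⟩
  exact ⟨m, hm, lt_of_not_ge fun h ↦ by simpa using hmax _ h⟩

theorem commutatorElement_lt_sq (harch : ∀ x y : G, 1 < x → ∃ n : ℕ, y ≤ x ^ n) {ε : G}
    (hε : 1 < ε) (a b : G) : ⁅a, b⁆ < ε ^ 2 := by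
  obtain ⟨m, hm, hm'⟩ := exists_zpow_le_lt harch hε a
  obtain ⟨n, hn, hn'⟩ := exists_zpow_le_lt harch hε b
  calc ⁅a, b⁆ = a * b * (b * a)⁻¹ := by group
    _ < ε ^ (m + 1) * ε ^ (n + 1) * (ε ^ n * ε ^ m)⁻¹ :=
      mul_lt_mul_of_lt_of_le (mul_lt_mul_of_lt_of_lt hm' hn')
        (inv_le_inv_iff.2 (mul_le_mul' hn hm))
    _ = ε ^ 2 := by
      rw [← zpow_add, ← zpow_add, ← zpow_neg, ← zpow_add, ← zpow_natCast]
      congr 1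
      push_cast
      ring

theorem exists_one_lt_sq_le {ε z : G} (hε : 1 < ε) (hεz : ε < z) : ∃ δ, 1 < δ ∧ δ ^ 2 ≤ z := by
  rcases le_or_gt (ε ^ 2) z with h | h
  · exact ⟨ε, hε, h⟩
  · refine ⟨ε⁻¹ * z, lt_inv_mul_iff_mul_lt.2 (by simpa using hεz), le_of_lt ?_⟩
    calc (ε⁻¹ * z) ^ 2 = ε⁻¹ * z * ε⁻¹ * z := by rw [sq, ← mul_assoc]
      _ < ε⁻¹ * ε ^ 2 * ε⁻¹ * z := by gcongr
      _ = z := by rw [sq]; group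

theorem exists_eq_zpow_of_isLeast (harch : ∀ x y : G, 1 < x → ∃ n : ℕ, y ≤ x ^ n) {z : G}
    (hz : IsLeast (Ioi 1) z) (g : G) : ∃ m : ℤ, g = z ^ m := by
  obtain ⟨m, hm, hm'⟩ := exists_zpow_le_lt harch hz.1 g
  have h1 : 1 ≤ (z ^ m)⁻¹ * g := le_inv_mul_iff_mul_le.2 (by simpa using hm)
  have h2 : (z ^ m)⁻¹ * g < z := inv_mul_lt_iff_lt_mul.2 (by rwa [← zpow_add_one])
  have h3 : (z ^ m)⁻¹ * g = 1 := (h1.eq_or_lt.resolve_right fun h ↦ (hz.2 h).not_gt h2).symm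
  exact ⟨m, (inv_mul_eq_one.1 h3).symm⟩

theorem mul_comm_of_archimedean (harch : ∀ x y : G, 1 < x → ∃ n : ℕ, y ≤ x ^ n) (a b : G) :
    a * b = b * a := by
  suffices h : ∀ a b : G, ¬ 1 < ⁅a, b⁆ by
    rw [← commutatorElement_eq_one_iff_mul_comm]
    refine le_antisymm (not_lt.1 (h a b)) ?_
    rw [← inv_le_one', commutatorElement_inv]
    exact not_lt.1 (h b a)
  intro a b hz
  by_cases hleast : IsLeast (Ioi 1) ⁅a, b⁆
  · obtain ⟨p, hp⟩ := exists_eq_zpow_of_isLeast harch hleast a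
    obtain ⟨q, hq⟩ := exists_eq_zpow_of_isLeast harch hleast b
    have hab : Commute (⁅a, b⁆ ^ p) (⁅a, b⁆ ^ q) := Commute.zpow_zpow_self ..
    rw [← hp, ← hq] at hab
    exact hz.ne' (commutatorElement_eq_one_iff_mul_comm.2 hab.eq)
  · obtain ⟨ε, hε, hεz⟩ : ∃ ε, 1 < ε ∧ ε < ⁅a, b⁆ := by
      simpa [IsLeast, hz, lowerBounds] using hleast
    obtain ⟨δ, hδ, hδz⟩ := exists_one_lt_sq_le hε hεz
    exact (commutatorElement_lt_sq harch hδ a b).not_ge hδz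

end Holder

theorem Group.FG.sSup_ne_top {G : Type*} [Group G] (hfg : Group.FG G) {K : Set (Subgroup G)}
    (hne : K.Nonempty) (hK : DirectedOn (· ≤ ·) K) (htop : ∀ H ∈ K, H ≠ ⊤) : sSup K ≠ ⊤ := by
  obtain ⟨S, hS⟩ := Group.fg_def.1 hfg
  intro h
  have hSK : (S : Set G) ⊆ ⋃ H ∈ K, (H : Set G) := fun s _ ↦ by
    simpa using (Subgroup.mem_sSup_of_directedOn hne hK).1 (h ▸ Subgroup.mem_top s)
  obtain ⟨H, hHK, hSH⟩ := hK.exists_mem_subset_of_finset_subset_biUnion hne hSK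
  exact htop H hHK (eq_top_iff.2 (hS ▸ (Subgroup.closure_le H).2 hSH))

namespace Subgroup

variable {G : Type*} [Group G] [LinearOrder G]

variable (G) in
def properConvexSubgroups : Set (Subgroup G) := {H | (H : Set G).OrdConnected ∧ H ≠ ⊤}

variable (G) in
def maxProperConvex : Subgroup G := sSup (properConvexSubgroups G)

theorem eq_top_of_not_le_maxProperConvex {H : Subgroup G} (hH : (H : Set G).OrdConnected)
    (hHC : ¬ H ≤ maxProperConvex G) : H = ⊤ := by
  by_contra hne
  exact hHC (le_sSup ⟨hH, hne⟩)

theorem bot_mem_properConvexSubgroups [Nontrivial G] : ⊥ ∈ properConvexSubgroups G :=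
  ⟨by simp [ordConnected_singleton], bot_ne_top⟩

variable [MulLeftMono G] [MulRightMono G]

theorem mem_of_mabs_le {H : Subgroup G} (hH : (H : Set G).OrdConnected) {g h : G} (hh : h ∈ H)
    (hgh : |g|ₘ ≤ |h|ₘ) : g ∈ H :=
  mabs_mem_iff.1 (hH.out H.one_mem (mabs_mem_iff.2 hh) ⟨one_le_mabs g, hgh⟩)

theorem isChain_ordConnected : IsChain (· ≤ ·) {H : Subgroup G | (H : Set G).OrdConnected} := by
  intro H hH K hK _
  by_contra! h
  obtain ⟨p, hpH, hpK⟩ := SetLike.not_le_iff_exists.1 h.1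
  obtain ⟨q, hqK, hqH⟩ := SetLike.not_le_iff_exists.1 h.2
  rcases le_total |p|ₘ |q|ₘ with hpq | hqp
  · exact hpK (mem_of_mabs_le hK hqK hpq)
  · exact hqH (mem_of_mabs_le hH hpH hqp)

def boundedByPow (x : G) : Subgroup G where
  carrier := {g | ∃ n : ℕ, (x ^ n)⁻¹ ≤ g ∧ g ≤ x ^ n}
  one_mem' := ⟨0, by simp⟩
  inv_mem' := fun ⟨n, h₁, h₂⟩ ↦ ⟨n, inv_le_inv_iff.2 h₂, by simpa using inv_le_inv_iff.2 h₁⟩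
  mul_mem' := fun ⟨n, hg₁, hg₂⟩ ⟨m, hh₁, hh₂⟩ ↦ ⟨n + m, by
    simpa [pow_add, ← mul_inv_rev, ← pow_add, add_comm] using mul_le_mul' hg₁ hh₁,
    pow_add x n m ▸ mul_le_mul' hg₂ hh₂⟩

theorem ordConnected_boundedByPow {x : G} (hx : 1 ≤ x) :
    (boundedByPow x : Set G).OrdConnected := by
  refine ⟨?_⟩
  rintro g ⟨n, hg, -⟩ h ⟨m, -, hh⟩ y ⟨hgy, hyh⟩
  refine ⟨n + m, ?_, ?_⟩
  · exact (inv_le_inv_iff.2 (pow_le_pow_right' hx (n.le_add_right m))).trans (hg.trans hgy)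
  · exact hyh.trans (hh.trans (pow_le_pow_right' hx (m.le_add_left n)))

theorem mem_boundedByPow_self {x : G} (hx : 1 ≤ x) : x ∈ boundedByPow x :=
  ⟨1, by simpa using (inv_le_one'.2 hx).trans hx, by simp⟩

theorem directedOn_properConvexSubgroups : DirectedOn (· ≤ ·) (properConvexSubgroups G) :=
  (isChain_ordConnected.mono fun _ hH ↦ hH.1).directedOn

theorem mem_maxProperConvex [Nontrivial G] {g : G} :
    g ∈ maxProperConvex G ↔ ∃ H ∈ properConvexSubgroups G, g ∈ H :=
  mem_sSup_of_directedOn ⟨⊥, bot_mem_properConvexSubgroups⟩ directedOn_properConvexSubgroups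

theorem maxProperConvex_ne_top [Nontrivial G] (hfg : Group.FG G) : maxProperConvex G ≠ ⊤ :=
  hfg.sSup_ne_top ⟨⊥, bot_mem_properConvexSubgroups⟩ directedOn_properConvexSubgroups
    fun _ hH ↦ hH.2

instance [Nontrivial G] : (maxProperConvex G : Set G).OrdConnected := by
  refine ⟨fun x hx y hy g hg ↦ ?_⟩
  obtain ⟨H, hH, hxH⟩ := mem_maxProperConvex.1 hx
  obtain ⟨K, hK, hyK⟩ := mem_maxProperConvex.1 hy
  rcases isChain_ordConnected.total hH.1 hK.1 with hHK | hKH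
  · exact (le_sSup hK : K ≤ maxProperConvex G) (hK.1.out (hHK hxH) hyK hg)
  · exact (le_sSup hH : H ≤ maxProperConvex G) (hH.1.out hxH (hKH hyK) hg)

instance [Nontrivial G] : (maxProperConvex G).Normal := by
  refine ⟨fun x hx g ↦ ?_⟩
  obtain ⟨H, ⟨hH, hHtop⟩, hxH⟩ := mem_maxProperConvex.1 hx
  have hconj : Monotone (MulAut.conj g⁻¹) := fun _ _ hyz ↦ by
    simpa using mul_le_mul_left (mul_le_mul_right hyz g⁻¹) g
  have hH' : H.comap (MulAut.conj g⁻¹).toMonoidHom ∈ properConvexSubgroups G := by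
    refine ⟨hH.preimage_mono (f := MulAut.conj g⁻¹) hconj, fun htop ↦ ?_⟩
    refine hHtop (eq_top_iff.2 fun y _ ↦ ?_)
    simpa [mul_assoc] using htop.ge (mem_top (g * y * g⁻¹))
  exact (le_sSup hH' : _ ≤ maxProperConvex G) (by simpa [mul_assoc] using hxH)

theorem exists_le_pow_of_notMem_maxProperConvex {x : G} (hx : 1 ≤ x)
    (hxC : x ∉ maxProperConvex G) (g : G) : ∃ n : ℕ, g ≤ x ^ n := by
  have htop := eq_top_of_not_le_maxProperConvex (ordConnected_boundedByPow hx)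
    fun h ↦ hxC (h (mem_boundedByPow_self hx))
  obtain ⟨n, -, hn⟩ : g ∈ boundedByPow x := htop ▸ mem_top g
  exact ⟨n, hn⟩

end Subgroup

namespace QuotientGroup

variable {G : Type*} [Group G] [LinearOrder G] [MulLeftMono G] [MulRightMono G]
  {C : Subgroup G} [(C : Set G).OrdConnected]

noncomputable instance : LinearOrder (G ⧸ C) where
  le p q := ∃ g h : G, g ≤ h ∧ (g : G ⧸ C) = p ∧ (h : G ⧸ C) = q
  le_refl p := by
    obtain ⟨g, rfl⟩ := mk_surjective p
    exact ⟨g, g, le_rfl, rfl, rfl⟩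
  le_trans := by
    rintro _ _ _ ⟨g, h, hgh, rfl, rfl⟩ ⟨h', k, hhk, hh, rfl⟩
    have hc : h⁻¹ * h' ∈ C := QuotientGroup.eq.1 hh.symm
    refine ⟨g * (h⁻¹ * h'), k, ?_, mk_mul_of_mem g hc, rfl⟩
    calc g * (h⁻¹ * h') ≤ h * (h⁻¹ * h') := mul_le_mul_left hgh _
      _ = h' := mul_inv_cancel_left h h'
      _ ≤ k := hhk
  le_antisymm := by
    rintro _ _ ⟨g, h, hgh, rfl, rfl⟩ ⟨h', g', hhg, hh, hg⟩
    have hc : g⁻¹ * g' * (h'⁻¹ * h) ∈ C :=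
      C.mul_mem (QuotientGroup.eq.1 hg.symm) (QuotientGroup.eq.1 hh)
    refine QuotientGroup.eq.2 (Set.OrdConnected.out ‹_› C.one_mem hc ⟨?_, ?_⟩)
    · exact le_inv_mul_iff_mul_le.2 (by simpa using hgh)
    · calc g⁻¹ * h = g⁻¹ * 1 * h := by group
        _ ≤ g⁻¹ * (g' * h'⁻¹) * h := by gcongr; exact le_mul_inv_iff_mul_le.2 (by simpa using hhg)
        _ = g⁻¹ * g' * (h'⁻¹ * h) := by group
  le_total p q := by
    obtain ⟨g, rfl⟩ := mk_surjective p
    obtain ⟨h, rfl⟩ := mk_surjective q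
    exact (le_total g h).imp (fun hgh ↦ ⟨g, h, hgh, rfl, rfl⟩) fun hhg ↦ ⟨h, g, hhg, rfl, rfl⟩
  toDecidableLE := Classical.decRel _

theorem mk_monotone : Monotone (QuotientGroup.mk : G → G ⧸ C) :=
  fun g h hgh ↦ ⟨g, h, hgh, rfl, rfl⟩

variable [C.Normal]

instance : MulLeftMono (G ⧸ C) := ⟨by
  rintro f _ _ ⟨g, h, hgh, rfl, rfl⟩
  obtain ⟨f, rfl⟩ := mk_surjective f
  exact mk_monotone (mul_le_mul_right hgh f)⟩

instance : MulRightMono (G ⧸ C) := ⟨by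
  rintro f _ _ ⟨g, h, hgh, rfl, rfl⟩
  obtain ⟨f, rfl⟩ := mk_surjective f
  exact mk_monotone (mul_le_mul_left hgh f)⟩

theorem exists_one_le_mk_eq {q : G ⧸ C} (hq : 1 ≤ q) : ∃ u : G, 1 ≤ u ∧ (u : G ⧸ C) = q := by
  obtain ⟨g, h, hgh, hg, rfl⟩ := hq
  refine ⟨g⁻¹ * h, le_inv_mul_iff_mul_le.2 (by simpa using hgh), ?_⟩
  rw [mk_mul, mk_inv, hg, inv_one, one_mul]

end QuotientGroup

theorem Subgroup.archimedean_quotient_maxProperConvex {G : Type*} [Group G] [LinearOrder G]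
    [MulLeftMono G] [MulRightMono G] [Nontrivial G] (x y : G ⧸ Subgroup.maxProperConvex G)
    (hx : 1 < x) : ∃ n : ℕ, y ≤ x ^ n := by
  obtain ⟨u, hu, rfl⟩ := QuotientGroup.exists_one_le_mk_eq hx.le
  obtain ⟨g, rfl⟩ := QuotientGroup.mk_surjective y
  have huC : u ∉ Subgroup.maxProperConvex G := fun h ↦ hx.ne' ((QuotientGroup.eq_one_iff u).2 h)
  obtain ⟨n, hn⟩ := Subgroup.exists_le_pow_of_notMem_maxProperConvex hu huC g
  exact ⟨n, QuotientGroup.mk_monotone hn⟩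

theorem CommGroup.exists_surjective_multiplicativeInt {A : Type*} [CommGroup A]
    [IsMulTorsionFree A] [Nontrivial A] [Group.FG A] :
    ∃ φ : A →* Multiplicative ℤ, Surjective φ := by
  let b := Module.Free.chooseBasis ℤ (Additive A)
  obtain ⟨i⟩ := b.index_nonempty
  refine ⟨AddMonoidHom.toMultiplicativeRight (b.coord i).toAddMonoidHom, fun m ↦ ?_⟩
  exact ⟨(m.toAdd • b i).toMul, by simp⟩

theorem exists_surjective_multiplicativeInt_of_archimedean {G : Type*} [Group G] [LinearOrder G]
    [MulLeftMono G] [MulRightMono G] [Nontrivial G] [Group.FG G]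
    (harch : ∀ x y : G, 1 < x → ∃ n : ℕ, y ≤ x ^ n) : ∃ φ : G →* Multiplicative ℤ, Surjective φ :=
  letI : CommGroup G := { mul_comm := mul_comm_of_archimedean harch }
  CommGroup.exists_surjective_multiplicativeInt

/-- Levi: a nontrivial finitely generated bi-orderable group
surjects onto the integers. -/
theorem biOrderable_fg_surjects_onto_int {G : Type*} [Group G] [Nontrivial G]
    (hfg : Group.FG G) (hbo : BiOrderable G) :
    ∃ φ : G →* Multiplicative ℤ, Function.Surjective φ := by
  obtain ⟨r, hr, hleft, hright⟩ := hbo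
  classical
  let : LinearOrder G := linearOrderOfSTO r
  have : MulLeftStrictMono G := ⟨hleft⟩
  have : MulRightStrictMono G := ⟨fun f g h ↦ hright f g h⟩
  have := mulLeftMono_of_mulLeftStrictMono G
  have := mulRightMono_of_mulRightStrictMono G
  have : Nontrivial (G ⧸ Subgroup.maxProperConvex G) :=
    QuotientGroup.nontrivial_iff.2 (Subgroup.maxProperConvex_ne_top hfg)
  obtain ⟨ψ, hψ⟩ := exists_surjective_multiplicativeInt_of_archimedean
    (Subgroup.archimedean_quotient_maxProperConvex (G := G))
  exact ⟨ψ.comp (QuotientGroup.mk' _), hψ.comp (QuotientGroup.mk'_surjective _)⟩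
end

section
/- Every free group is bi-orderable: for any set (type) α, the free group on α admits a strict linear order that is invariant under both left and right multiplication. -/
open Function Pointwise

theorem BiOrderable.of_injective {G H : Type*} [Group G] [Group H] (f : G →* H)
    (hf : Injective f) (hH : BiOrderable H) : BiOrderable G := by
  obtain ⟨r, hr, hleft, hright⟩ := hH
  refine ⟨r on f, hf.isStrictTotalOrder_onFun r, fun a g h hgh => ?_, fun a g h hgh => ?_⟩
  · simpa only [onFun, map_mul] using hleft (f a) _ _ hgh
  · simpa only [onFun, map_mul] using hright (f a) _ _ hgh

theorem Pi.isStrictTotalOrder_lex {ι : Type*} {β : ι → Type*} (r : ι → ι → Prop)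
    [IsWellOrder ι r] [∀ i, LinearOrder (β i)] :
    IsStrictTotalOrder (∀ i, β i) (Pi.Lex r (· < ·)) := by
  -- for the linear order induced by `r`, `<` on `Lex (∀ i, β i)` is `Pi.Lex r (· < ·)`
  let := IsWellOrder.linearOrder r
  have : WellFoundedLT ι := ⟨IsWellFounded.wf (r := r)⟩
  exact (inferInstance : IsStrictTotalOrder (Lex (∀ i, β i)) (· < ·))

theorem Pi.lex_of_sub_eq_sub {ι β : Type*} {r : ι → ι → Prop} [IsTrans ι r] [AddGroup β] [LT β]
    [AddRightStrictMono β] {x y x' y' : ι → β}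
    (h : ∀ i, (∀ j, r j i → x j = y j) → y' i - x' i = y i - x i)
    (hxy : Pi.Lex r (· < ·) x y) : Pi.Lex r (· < ·) x' y' := by
  obtain ⟨i, hbelow, hi⟩ := hxy
  refine ⟨i, fun j hj => ?_, ?_⟩
  · have := h j fun k hk => hbelow k (_root_.trans hk hj)
    rw [hbelow j hj, sub_self, sub_eq_zero] at this
    exact this.symm
  · show x' i < y' i
    rw [← sub_pos, h i hbelow, sub_pos]
    exact hi

theorem List.exists_isWellOrder_of_length_lt (α : Type*) :
    ∃ r : List α → List α → Prop, IsWellOrder (List α) r ∧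
      ∀ u v : List α, u.length < v.length → r u v :=
  ⟨Prod.Lex (· < ·) WellOrderingRel on fun w => (w.length, w),
    Injective.isWellOrder (Prod.Lex (· < ·) WellOrderingRel) fun _ _ h => congrArg Prod.snd h,
    fun _ _ h => Prod.Lex.left _ _ h⟩

namespace Magnus

variable {α : Type*}

/-- Product of power series in noncommuting variables indexed by `α`, given by their coefficients
on words. -/
def conv (f g : List α → ℤ) (w : List α) : ℤ :=
  ∑ i ∈ Finset.range (w.length + 1), f (w.take i) * g (w.drop i)

def one (w : List α) : ℤ := if w = [] then 1 else 0

theorem conv_nil (f g : List α → ℤ) : conv f g [] = f [] * g [] := by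
  simp [conv]

theorem conv_cons (f g : List α → ℤ) (a : α) (t : List α) :
    conv f g (a :: t) = f [] * g (a :: t) + conv (fun u => f (a :: u)) g t := by
  rw [conv, List.length_cons, Finset.sum_range_succ', add_comm]
  simp [conv]

theorem conv_one (f : List α → ℤ) : conv f one = f := by
  funext w
  rw [conv, Finset.sum_eq_single_of_mem w.length (by simp)]
  · simp [one]
  · intro i hi hne
    have : w.drop i ≠ [] := by simp at hi ⊢; omega
    simp [one, this]

theorem one_conv (f : List α → ℤ) : conv one f = f := by
  funext w
  rw [conv, Finset.sum_eq_single_of_mem 0 (by simp)]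
  · simp [one]
  · intro i hi hne
    have : w.take i ≠ [] := by
      rw [Ne, List.take_eq_nil_iff, ← List.length_eq_zero_iff]; simp at hi; omega
    simp [one, this]

theorem conv_add_left (f f' g : List α → ℤ) : conv (f + f') g = conv f g + conv f' g := by
  funext w
  simp [conv, add_mul, Finset.sum_add_distrib]

theorem conv_smul_left (c : ℤ) (f g : List α → ℤ) : conv (c • f) g = c • conv f g := by
  funext w
  simp [conv, Finset.mul_sum, mul_assoc]

theorem conv_sub_left (f f' g : List α → ℤ) : conv (f - f') g = conv f g - conv f' g := by
  funext w
  simp [conv, sub_mul, Finset.sum_sub_distrib]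

theorem conv_sub_right (f g g' : List α → ℤ) : conv f (g - g') = conv f g - conv f g' := by
  funext w
  simp [conv, mul_sub, Finset.sum_sub_distrib]

theorem conv_assoc (f g h : List α → ℤ) : conv (conv f g) h = conv f (conv g h) := by
  funext w
  induction w generalizing f with
  | nil => simp [conv_nil, mul_assoc]
  | cons a t ih =>
    have hshift : (fun u => conv f g (a :: u)) = f [] • (fun u => g (a :: u)) +
        conv (fun u => f (a :: u)) g := by
      funext u
      simp [conv_cons]
    rw [conv_cons, hshift, conv_add_left, conv_smul_left, Pi.add_apply, ih, conv_cons f,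
      conv_cons g, conv_nil]
    simp only [Pi.smul_apply, smul_eq_mul]
    ring

def inv (f : List α → ℤ) : List α → ℤ
  | [] => 1
  | a :: t => -∑ i ∈ Finset.range (t.length + 1), f (a :: t.take i) * inv f (t.drop i)
  termination_by w => w.length
  decreasing_by simp only [List.length_drop, List.length_cons]; omega

theorem conv_inv {f : List α → ℤ} (hf : f [] = 1) : conv f (inv f) = one := by
  funext w
  cases w with
  | nil => simp [conv_nil, one, hf, inv]
  | cons a t => rw [conv_cons, hf, one_mul, inv, conv]; simp [one]

/-- Alternating words (no two equal adjacent letters) are closed under taking prefixes and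
suffixes, so products of series restrict to them. There, `f` looks like `1 + c X_a`. -/
def AltLinear (a : α) (f : List α → ℤ) : Prop :=
  ∀ x u, (x :: u).IsChain (· ≠ ·) → x :: u ≠ [a] → f (x :: u) = 0

theorem conv_apply_cons_of_altLinear {a : α} {f : List α → ℤ} (hf₀ : f [] = 1)
    (hf : AltLinear a f) (g : List α → ℤ) {x : α} {u : List α} (hxu : (x :: u).IsChain (· ≠ ·)) :
    conv f g (x :: u) = g (x :: u) + f [x] * g u := by
  rw [conv_cons, hf₀, one_mul, conv, Finset.sum_eq_single_of_mem 0 (by simp)]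
  · simp
  · intro i hi hi0
    have hlen : 2 ≤ (x :: u.take i).length := by simp at hi ⊢; omega
    have hchain : (x :: u.take i).IsChain (· ≠ ·) := by simpa using hxu.take (i + 1)
    rw [hf x _ hchain (by rintro h; simp [h] at hlen), zero_mul]

theorem AltLinear.apply_singleton_mul_eq_zero {a x : α} {u : List α} {f : List α → ℤ}
    (hf : AltLinear a f) (hxu : (x :: u).IsChain (· ≠ ·)) (hne : x :: u ≠ [a]) {c : ℤ}
    (hc : u ≠ [] → u ≠ [a] → c = 0) : f [x] * c = 0 := by
  by_cases hx : x = a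
  · subst hx
    refine mul_eq_zero_of_right _ (hc (by rintro rfl; exact hne rfl) ?_)
    rintro rfl
    simp at hxu
  · exact mul_eq_zero_of_left (hf x [] (List.isChain_singleton x) (by simpa)) _

theorem conv_sub_conv_apply_left {r : List α → List α → Prop}
    (hr : ∀ u v : List α, u.length < v.length → r u v) {f x y : List α → ℤ} (hf : f [] = 1)
    {v : List α} (hxy : ∀ u, r u v → x u = y u) : conv f y v - conv f x v = y v - x v := by
  rw [← Pi.sub_apply, ← conv_sub_right, conv, Finset.sum_eq_single_of_mem 0 (by simp)]
  · simp [hf]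
  · intro i hi hi0
    rw [Pi.sub_apply, hxy _ (hr _ _ (by simp at hi ⊢; omega)), sub_self, mul_zero]

theorem conv_sub_conv_apply_right {r : List α → List α → Prop}
    (hr : ∀ u v : List α, u.length < v.length → r u v) {f x y : List α → ℤ} (hf : f [] = 1)
    {v : List α} (hxy : ∀ u, r u v → x u = y u) : conv y f v - conv x f v = y v - x v := by
  rw [← Pi.sub_apply, ← conv_sub_left, conv, Finset.sum_eq_single_of_mem v.length (by simp)]
  · simp [hf]
  · intro i hi hi0
    rw [Pi.sub_apply, hxy _ (hr _ _ (by simp at hi ⊢; omega)), sub_self, zero_mul]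

end Magnus

def MagnusGroup (α : Type*) := {f : List α → ℤ // f [] = 1}

namespace MagnusGroup

open Magnus

variable {α : Type*}

instance : Mul (MagnusGroup α) := ⟨fun f g => ⟨conv f.1 g.1, by rw [conv_nil, f.2, g.2, one_mul]⟩⟩
instance : One (MagnusGroup α) := ⟨⟨one, by simp [one]⟩⟩
instance : Inv (MagnusGroup α) := ⟨fun f => ⟨inv f.1, by rw [inv]⟩⟩

theorem mul_val (f g : MagnusGroup α) : (f * g).1 = conv f.1 g.1 := rfl
theorem one_val : (1 : MagnusGroup α).1 = one := rfl

instance : Group (MagnusGroup α) :=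
  Group.ofRightAxioms (fun f g h => Subtype.ext (conv_assoc f.1 g.1 h.1))
    (fun f => Subtype.ext (conv_one f.1)) (fun f => Subtype.ext (conv_inv f.2))

open Classical in
noncomputable def onePlusX (a : α) : MagnusGroup α :=
  ⟨fun w => if w = [] ∨ w = [a] then 1 else 0, by simp⟩

def coeffHom (a : α) : MagnusGroup α →* Multiplicative ℤ where
  toFun f := .ofAdd (f.1 [a])
  map_one' := by simp [one_val, one]
  map_mul' f g := by
    simp [mul_val, conv, Finset.sum_range_succ, f.2, g.2, ← ofAdd_add, add_comm]

theorem coeffHom_onePlusX (a : α) : coeffHom a (onePlusX a) = .ofAdd 1 := by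
  simp [coeffHom, onePlusX]

def altLinear (a : α) : Subgroup (MagnusGroup α) where
  carrier := {f | AltLinear a f.1}
  one_mem' x u _ _ := by simp [one_val, one]
  mul_mem' {f g} hf hg x u hxu hne := by
    rw [mul_val, conv_apply_cons_of_altLinear f.2 hf _ hxu, hg x u hxu hne, zero_add]
    refine hf.apply_singleton_mul_eq_zero hxu hne fun hu hua => ?_
    obtain ⟨y, v, rfl⟩ := List.exists_cons_of_ne_nil hu
    exact hg y v hxu.tail hua
  inv_mem' {f} hf := by
    have step : ∀ x u, (x :: u).IsChain (· ≠ ·) → x :: u ≠ [a] →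
        (u ≠ [] → u ≠ [a] → (f⁻¹).1 u = 0) → (f⁻¹).1 (x :: u) = 0 := by
      intro x u hxu hne hu
      have h := conv_apply_cons_of_altLinear f.2 hf (f⁻¹).1 hxu
      rw [← mul_val, mul_inv_cancel, one_val, one, if_neg (List.cons_ne_nil _ _),
        hf.apply_singleton_mul_eq_zero hxu hne hu, add_zero] at h
      exact h.symm
    intro x u
    induction u generalizing x with
    | nil => exact fun hxu hne => step x [] hxu hne (absurd rfl)
    | cons y v ih => exact fun hxu hne => step x _ hxu hne fun _ h => ih y hxu.tail h

theorem onePlusX_mem_altLinear (a : α) : onePlusX a ∈ altLinear a := by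
  intro x u _ hne
  simp [onePlusX, hne]

theorem onePlusX_zpow_apply_singleton [DecidableEq α] (a x : α) (n : ℤ) :
    (onePlusX a ^ n).1 [x] = if x = a then n else 0 := by
  split_ifs with hx
  · subst hx
    have h := congrArg Multiplicative.toAdd (map_zpow (coeffHom x) (onePlusX x) n)
    rwa [coeffHom_onePlusX, toAdd_zpow, toAdd_ofAdd, smul_eq_mul, mul_one] at h
  · exact (altLinear a).zpow_mem (onePlusX_mem_altLinear a) n x [] (List.isChain_singleton x)
      (by simpa)

/-- The series whose nonzero coefficients at alternating words of maximal length `d` exist and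
all begin with `a`. -/
def pingPongSet (a : α) : Set (MagnusGroup α) :=
  {f | ∃ d, (∃ v, v.IsChain (· ≠ ·) ∧ v.length = d ∧ f.1 v ≠ 0) ∧
    ∀ v, v.IsChain (· ≠ ·) → d ≤ v.length → f.1 v ≠ 0 → v.length = d ∧ v.head? = some a}

theorem onePlusX_mem_pingPongSet (a : α) : onePlusX a ∈ pingPongSet a := by
  refine ⟨1, ⟨[a], List.isChain_singleton a, rfl, by simp [onePlusX]⟩, fun v _ hv hne => ?_⟩
  have : v = [a] := by
    by_contra h
    have : v ≠ [] := by rintro rfl; simp at hv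
    simp_all [onePlusX]
  simp [this]

theorem pairwise_disjoint_pingPongSet :
    Pairwise (Disjoint on (pingPongSet : α → Set (MagnusGroup α))) := by
  intro a b hab
  refine Set.disjoint_left.mpr fun f ⟨d, ⟨v, hv, hvd, hfv⟩, ha⟩ ⟨e, ⟨w, hw, hwe, hfw⟩, hb⟩ => hab ?_
  rcases le_total d e with hde | hed
  · exact Option.some_injective _ (((ha w hw (hwe ▸ hde) hfw).2).symm.trans (hb w hw hwe.ge hfw).2)
  · exact Option.some_injective _ (((ha v hv hvd.ge hfv).2).symm.trans (hb v hv (hvd ▸ hed) hfv).2)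

theorem onePlusX_zpow_smul_pingPongSet_subset {a b : α} (hab : a ≠ b) {n : ℤ} (hn : n ≠ 0) :
    onePlusX a ^ n • pingPongSet b ⊆ pingPongSet a := by
  classical
  rw [Set.smul_set_subset_iff]
  rintro f ⟨d, ⟨w, hw, hwd, hfw⟩, hf⟩
  rw [smul_eq_mul]
  have hmul : ∀ x u, (x :: u).IsChain (· ≠ ·) →
      (onePlusX a ^ n * f).1 (x :: u) = f.1 (x :: u) + (if x = a then n else 0) * f.1 u :=
    fun x u hxu => by
      rw [mul_val, conv_apply_cons_of_altLinear (onePlusX a ^ n).2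
        ((altLinear a).zpow_mem (onePlusX_mem_altLinear a) n) f.1 hxu,
        onePlusX_zpow_apply_singleton]
  have hvanish : ∀ v, v.IsChain (· ≠ ·) → d < v.length → f.1 v = 0 := fun v hv hlt => by
    by_contra h
    exact hlt.ne' (hf v hv hlt.le h).1
  obtain ⟨w', rfl⟩ : ∃ w', w = b :: w' := by
    have := (hf w hw hwd.ge hfw).2
    exact ⟨w.tail, List.eq_cons_of_mem_head? this⟩
  have haw : (a :: b :: w').IsChain (· ≠ ·) := List.isChain_cons_cons.mpr ⟨hab, hw⟩
  refine ⟨d + 1, ⟨a :: b :: w', haw, by simp [← hwd], ?_⟩, ?_⟩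
  · rw [hmul a _ haw, hvanish _ haw (by simp [← hwd]), if_pos rfl, zero_add]
    exact mul_ne_zero hn hfw
  · rintro (_ | ⟨x, u⟩) hxu hlen hne
    · simp at hlen
    rw [hmul x u hxu, hvanish _ hxu (by simpa using hlen), zero_add] at hne
    have hx : x = a := by by_contra hx; simp [hx] at hne
    subst hx
    have hu := (hf u hxu.tail (by simpa using hlen) (right_ne_zero_of_mul hne)).1
    simp [hu]

noncomputable def magnusHom : FreeGroup α →* MagnusGroup α := FreeGroup.lift onePlusX

theorem magnusHom_injective_of_unique [Unique α] :
    Injective (magnusHom : FreeGroup α →* MagnusGroup α) := by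
  refine Injective.of_comp_right (g := FreeGroup.equivIntOfUnique.symm) (fun m n hmn => ?_)
    FreeGroup.equivIntOfUnique.symm.surjective
  classical
  have := congrArg (fun f : MagnusGroup α => f.1 [default]) hmn
  simpa [FreeGroup.equivIntOfUnique, magnusHom, onePlusX_zpow_apply_singleton] using this

theorem magnusHom_injective : Injective (magnusHom : FreeGroup α →* MagnusGroup α) := by
  -- the ping-pong lemma for free products needs at least two factors
  rcases subsingleton_or_nontrivial α with hα | hα
  · rcases isEmpty_or_nonempty α with hα | ⟨⟨a⟩⟩
    · exact injective_of_subsingleton _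
    · have := uniqueOfSubsingleton a
      exact magnusHom_injective_of_unique
  obtain ⟨a⟩ := hα.to_nonempty
  have hcomp : magnusHom = (Monoid.CoprodI.lift fun a => FreeGroup.lift fun _ => onePlusX a).comp
      (freeGroupEquivCoprodI (ι := α)).toMonoidHom := by
    ext
    simp [magnusHom]
  rw [hcomp, MonoidHom.coe_comp]
  refine Injective.comp ?_ freeGroupEquivCoprodI.injective
  refine Monoid.CoprodI.lift_injective_of_ping_pong _ (Or.inr ⟨a, ?_⟩) pingPongSet
    (fun a => ⟨_, onePlusX_mem_pingPongSet a⟩) pairwise_disjoint_pingPongSet ?_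
  · exact Cardinal.ofNat_le_aleph0.trans (Cardinal.aleph0_le_mk _)
  · intro a b hab h hh
    obtain ⟨n, rfl⟩ : ∃ n : ℤ, FreeGroup.of () ^ n = h :=
      ⟨_, FreeGroup.freeGroupUnitEquivInt.symm_apply_apply h⟩
    have hn : n ≠ 0 := by rintro rfl; exact hh (zpow_zero _)
    simpa [map_zpow, FreeGroup.lift_apply_of] using onePlusX_zpow_smul_pingPongSet_subset hab hn

theorem biOrderable : BiOrderable (MagnusGroup α) := by
  obtain ⟨r, _, hr⟩ := List.exists_isWellOrder_of_length_lt α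
  have := Pi.isStrictTotalOrder_lex (β := fun _ : List α => ℤ) r
  refine ⟨Pi.Lex r (· < ·) on Subtype.val, Subtype.val_injective.isStrictTotalOrder_onFun _,
    fun f g h hgh => ?_, fun f g h hgh => ?_⟩
  · exact Pi.lex_of_sub_eq_sub (fun v hv => conv_sub_conv_apply_left hr f.2 hv) hgh
  · exact Pi.lex_of_sub_eq_sub (fun v hv => conv_sub_conv_apply_right hr f.2 hv) hgh

end MagnusGroup

/-- Every free group is bi-orderable. -/
theorem freeGroup_biOrderable (α : Type*) : BiOrderable (FreeGroup α) :=
  MagnusGroup.biOrderable.of_injective MagnusGroup.magnusHom MagnusGroup.magnusHom_injective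
end

section
/- A countable group G is left-orderable if and only if there exists an injective group homomorphism from G into the group of order-preserving bijections of the real line ℝ (equivalently, the group of orientation-preserving homeomorphisms of ℝ, with composition as the operation). -/
open Function

section LeftOrderable

variable {G : Type*} [Group G]

theorem LeftOrderable.exists_linearOrder (hG : LeftOrderable G) :
    ∃ _ : LinearOrder G, MulLeftMono G := by
  obtain ⟨r, hr, hmul⟩ := hG
  classical
  let o := linearOrderOfSTO r
  refine ⟨o, ⟨fun k g h hgh => ?_⟩⟩
  rcases hgh with rfl | hgh
  · exact le_rfl
  · exact Or.inr (hmul k g h hgh)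

theorem LeftOrderable.of_injective_s10 {β : Type*} [LinearOrder β] (φ : G → β) (hφ : Injective φ)
    (hmul : ∀ k g h : G, φ g < φ h → φ (k * g) < φ (k * h)) : LeftOrderable G :=
  ⟨fun g h => φ g < φ h,
    { trichotomous := fun _ _ hlt hgt =>
        hφ ((lt_trichotomy _ _).resolve_left hlt |>.resolve_right hgt)
      irrefl := fun _ => lt_irrefl _
      trans := fun _ _ _ => lt_trans }, hmul⟩

end LeftOrderable

def OrderIso.toPermHom (α : Type*) [LE α] : (α ≃o α) →* Equiv.Perm α where
  toFun := RelIso.toEquiv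
  map_one' := rfl
  map_mul' _ _ := rfl

theorem OrderIso.toPermHom_injective (α : Type*) [LE α] : Injective (OrderIso.toPermHom α) :=
  fun _ _ h => RelIso.ext (Equiv.ext_iff.mp h)

def OrderIso.conjMulEquiv {α β : Type*} [LE α] [LE β] (e : α ≃o β) : (α ≃o α) ≃* (β ≃o β) where
  toFun f := (e.symm.trans f).trans e
  invFun f := (e.trans f).trans e.symm
  left_inv f := by ext; simp
  right_inv f := by ext; simp
  map_mul' f g := by ext; simp [RelIso.mul_apply]

section LexAction

variable (G α : Type*) [Group G] [LinearOrder G] [MulLeftMono G] [LinearOrder α]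

def lexMulLeft : G →* (G ×ₗ α ≃o G ×ₗ α) where
  toFun g := Prod.Lex.prodLexCongr (OrderIso.mulLeft g) (OrderIso.refl α)
  map_one' := by ext x; simp [RelIso.one_apply, Prod.map]
  map_mul' g h := by ext x; simp [RelIso.mul_apply, Prod.map, mul_assoc]

theorem lexMulLeft_injective [Nonempty α] : Injective (lexMulLeft G α) := by
  intro g h hgh
  obtain ⟨a⟩ := ‹Nonempty α›
  simpa [lexMulLeft] using congrArg (fun x => (ofLex x).1) (DFunLike.congr_fun hgh (toLex (1, a)))

end LexAction

theorem exists_injective_hom_orderIso_rat {G : Type*} [Group G] [Countable G] [LinearOrder G]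
    [MulLeftMono G] :
    ∃ φ : G →* (ℚ ≃o ℚ), Injective φ := by
  have : Nonempty (G ×ₗ ℚ) := ⟨toLex (1, 0)⟩
  have : Countable (G ×ₗ ℚ) := inferInstanceAs (Countable (G × ℚ))
  obtain ⟨e⟩ := Order.iso_of_countable_dense (G ×ₗ ℚ) ℚ
  exact ⟨(e.conjMulEquiv : _ →* _).comp (lexMulLeft G ℚ),
    e.conjMulEquiv.injective.comp (lexMulLeft_injective G ℚ)⟩

noncomputable section RatExtend

def ratExtend (f : ℚ → ℚ) (x : ℝ) : ℝ :=
  sSup ((fun q : ℚ => (f q : ℝ)) '' {q : ℚ | (q : ℝ) < x})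

variable {f g : ℚ → ℚ}

theorem ratExtend_image_nonempty (f : ℚ → ℚ) (x : ℝ) :
    ((fun q : ℚ => (f q : ℝ)) '' {q : ℚ | (q : ℝ) < x}).Nonempty :=
  let ⟨q, hq⟩ := exists_rat_lt x
  ⟨f q, q, hq, rfl⟩

theorem ratExtend_image_le (hf : Monotone f) {x : ℝ} {p : ℚ} (hxp : x ≤ p) :
    ∀ y ∈ (fun q : ℚ => (f q : ℝ)) '' {q : ℚ | (q : ℝ) < x}, y ≤ f p := by
  rintro _ ⟨q, hq, rfl⟩
  show (f q : ℝ) ≤ f p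
  exact_mod_cast hf (by exact_mod_cast (hq.trans_le hxp).le)

theorem ratExtend_le (hf : Monotone f) {x : ℝ} {p : ℚ} (hxp : x ≤ p) : ratExtend f x ≤ f p :=
  csSup_le (ratExtend_image_nonempty f x) (ratExtend_image_le hf hxp)

theorem le_ratExtend (hf : Monotone f) {x : ℝ} {p : ℚ} (hpx : p < x) : (f p : ℝ) ≤ ratExtend f x :=
  let ⟨p', hp'⟩ := exists_rat_gt x
  le_csSup ⟨f p', ratExtend_image_le hf hp'.le⟩ ⟨p, hpx, rfl⟩

theorem lt_ratExtend (hf : StrictMono f) {x : ℝ} {p : ℚ} (hpx : p < x) :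
    (f p : ℝ) < ratExtend f x := by
  obtain ⟨p', hpp', hp'x⟩ := exists_rat_btwn hpx
  have hfp : (f p : ℝ) < f p' := by exact_mod_cast hf (by exact_mod_cast hpp')
  exact hfp.trans_le (le_ratExtend hf.monotone hp'x)

theorem ratExtend_strictMono (hf : StrictMono f) : StrictMono (ratExtend f) := by
  intro x y hxy
  obtain ⟨p, hxp, hpy⟩ := exists_rat_btwn hxy
  exact (ratExtend_le hf.monotone hxp.le).trans_lt (lt_ratExtend hf hpy)

theorem ratExtend_ratCast (f : ℚ ≃o ℚ) (p : ℚ) : ratExtend f p = f p := by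
  refine le_antisymm (ratExtend_le f.monotone le_rfl) (le_of_forall_lt fun c hc => ?_)
  obtain ⟨q, hcq, hq⟩ := exists_rat_btwn hc
  have hq' : f.symm q < p := f.symm_apply_lt.mpr (by exact_mod_cast hq)
  calc c < q := hcq
    _ = f (f.symm q) := by rw [f.apply_symm_apply]
    _ ≤ ratExtend f p := le_ratExtend f.monotone (by exact_mod_cast hq')

theorem ratExtend_comp (hf : Monotone f) (hg : StrictMono g) (x : ℝ) :
    ratExtend f (ratExtend g x) = ratExtend (f ∘ g) x := by
  apply le_antisymm
  · refine csSup_le (ratExtend_image_nonempty f _) ?_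
    rintro _ ⟨q, hq, rfl⟩
    obtain ⟨_, ⟨p, hpx, rfl⟩, hqp⟩ := exists_lt_of_lt_csSup (ratExtend_image_nonempty g x) hq
    change (q : ℝ) < g p at hqp
    calc (f q : ℝ) ≤ f (g p) := by exact_mod_cast hf (by exact_mod_cast hqp.le)
      _ ≤ ratExtend (f ∘ g) x := le_ratExtend (hf.comp hg.monotone) hpx
  · refine csSup_le (ratExtend_image_nonempty _ x) ?_
    rintro _ ⟨p, hpx, rfl⟩
    exact le_ratExtend hf (lt_ratExtend hg hpx)

theorem ratExtend_id (x : ℝ) : ratExtend id x = x := by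
  refine le_antisymm (csSup_le (ratExtend_image_nonempty _ x) ?_) (le_of_forall_lt fun c hc => ?_)
  · rintro _ ⟨q, hq, rfl⟩
    exact hq.le
  · obtain ⟨q, hcq, hqx⟩ := exists_rat_btwn hc
    exact hcq.trans_le (le_ratExtend monotone_id hqx)

theorem ratExtend_symm_ratExtend (f : ℚ ≃o ℚ) (x : ℝ) : ratExtend f.symm (ratExtend f x) = x := by
  have hid : ⇑f.symm ∘ ⇑f = id := funext f.symm_apply_apply
  rw [ratExtend_comp f.symm.monotone f.strictMono, hid, ratExtend_id]

def OrderIso.ratExtendHom : (ℚ ≃o ℚ) →* (ℝ ≃o ℝ) where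
  toFun f := Equiv.toOrderIso ⟨ratExtend f, ratExtend f.symm, ratExtend_symm_ratExtend f,
      ratExtend_symm_ratExtend f.symm⟩
    (ratExtend_strictMono f.strictMono).monotone (ratExtend_strictMono f.symm.strictMono).monotone
  map_one' := by ext x; exact ratExtend_id x
  map_mul' f g := by ext x; exact (ratExtend_comp f.monotone g.strictMono x).symm

theorem OrderIso.ratExtendHom_injective : Injective OrderIso.ratExtendHom := by
  intro f g hfg
  ext p
  have hp : ratExtend f p = ratExtend g p := DFunLike.congr_fun hfg (p : ℝ)
  rw [ratExtend_ratCast, ratExtend_ratCast] at hp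
  exact_mod_cast hp

end RatExtend

theorem Pi.toLex_comp_lt_toLex_comp {ι β γ : Type*} [LinearOrder ι] [Preorder β] [Preorder γ]
    {F : β → γ} (hF : StrictMono F) {u v : ι → β} (huv : toLex u < toLex v) :
    toLex (F ∘ u) < toLex (F ∘ v) :=
  let ⟨i, hpre, hi⟩ := huv
  ⟨i, fun j hj => congrArg F (hpre j hj), hF hi⟩

theorem LeftOrderable.of_strictMono_perm {G α ι : Type*} [Group G] [LinearOrder α] [LinearOrder ι]
    [WellFoundedLT ι] (f : G →* Equiv.Perm α) (hmono : ∀ g, StrictMono (f g)) (s : ι → α)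
    (hs : Injective fun g i => f g (s i)) : LeftOrderable G :=
  LeftOrderable.of_injective_s10 (fun g => toLex fun i => f g (s i)) (toLex.injective.comp hs)
    fun k _ _ hgh => by
      simp only [map_mul, Equiv.Perm.mul_apply]
      exact Pi.toLex_comp_lt_toLex_comp (hmono k) hgh

theorem injective_comp_of_denseRange {G α ι : Type*} [Group G] [LinearOrder α]
    [TopologicalSpace α] [OrderTopology α] [DenselyOrdered α] {f : G →* Equiv.Perm α}
    (hf : Injective f) (hmono : ∀ g, Monotone (f g)) {s : ι → α} (hs : DenseRange s) :
    Injective fun g i => f g (s i) := by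
  intro g h hgh
  have hcont : ∀ g, Continuous (f g) := fun g => (hmono g).continuous_of_surjective (f g).surjective
  refine hf (Equiv.ext fun x => ?_)
  refine congrFun (Continuous.ext_on hs (hcont g) (hcont h) ?_) x
  rintro _ ⟨i, rfl⟩
  exact congrFun hgh i

/-- a countable group is left-orderable iff it embeds into the
group of order-preserving bijections of the real line (i.e. there is an
injective homomorphism into `Equiv.Perm ℝ` whose image consists of strictly
monotone bijections). -/
theorem countable_leftOrderable_iff_embeds_homeoPlusReal
    (G : Type*) [Group G] [Countable G] :
    LeftOrderable G ↔
      ∃ f : G →* Equiv.Perm ℝ, Function.Injective f ∧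
        ∀ g : G, StrictMono ⇑(f g) := by
  constructor
  · intro hG
    obtain ⟨_, _⟩ := hG.exists_linearOrder
    obtain ⟨φ, hφ⟩ := exists_injective_hom_orderIso_rat (G := G)
    exact ⟨(OrderIso.toPermHom ℝ).comp (OrderIso.ratExtendHom.comp φ),
      (OrderIso.toPermHom_injective ℝ).comp (OrderIso.ratExtendHom_injective.comp hφ),
      fun g => (OrderIso.ratExtendHom (φ g)).strictMono⟩
  · rintro ⟨f, hf, hmono⟩
    obtain ⟨e, he⟩ := exists_surjective_nat ℚ
    have hdense : DenseRange fun n => (e n : ℝ) :=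
      Rat.denseRange_cast.comp he.denseRange Rat.continuous_coe_real
    exact LeftOrderable.of_strictMono_perm f hmono _
      (injective_comp_of_denseRange hf (fun g => (hmono g).monotone) hdense)
end

section
/- For every pair of relatively prime integers p, q ≥ 2, the torus knot group ⟨a, b ∣ aᵖ = b^q⟩, i.e. the presented group on two generators a, b with the single relator aᵖb^{−q}, is not bi-orderable: it admits no strict linear order invariant under both left and right multiplication. -/
/-- The torus knot group `⟨a, b ∣ aᵖ = b^q⟩`, presented on two generators
`a = of true`, `b = of false` with single relator `aᵖ b^{-q}`. -/
def torusKnotGroup (p q : ℕ) : Type :=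
  PresentedGroup
    ({FreeGroup.of true ^ p * (FreeGroup.of false ^ q)⁻¹} : Set (FreeGroup Bool))

instance (p q : ℕ) : Group (torusKnotGroup p q) := by
  unfold torusKnotGroup; infer_instance

namespace BiOrderable

variable {G : Type*} [Group G]

theorem pow_left_injective (hG : BiOrderable G) {n : ℕ} (hn : n ≠ 0) :
    Function.Injective (· ^ n : G → G) := by
  classical
  obtain ⟨r, hr, hleft, hright⟩ := hG
  let := linearOrderOfSTO r
  have : MulLeftStrictMono G := ⟨fun f _ _ h => hleft f _ _ h⟩
  have : MulRightStrictMono G := ⟨fun f _ _ h => hright f _ _ h⟩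
  exact (pow_left_strictMono hn).injective

theorem commute_of_commute_pow (hG : BiOrderable G) {n : ℕ} (hn : n ≠ 0) {x y : G}
    (h : Commute (x ^ n) y) : Commute x y := by
  have hconj : (y * x * y⁻¹) ^ n = x ^ n := by
    rw [conj_pow, ← h.eq, mul_inv_cancel_right]
  have : y * x * y⁻¹ = x := hG.pow_left_injective hn hconj
  exact (mul_inv_eq_iff_eq_mul.mp this).symm

end BiOrderable

theorem Equiv.Perm.exists_pow_eq_one_not_commute {p q : ℕ} (hp : 2 ≤ p) (hq : 2 ≤ q) :
    ∃ x y : Equiv.Perm ℕ, x ^ p = 1 ∧ y ^ q = 1 ∧ ¬Commute x y := by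
  obtain ⟨m, rfl⟩ : ∃ m, p = m + 2 := ⟨p - 2, by omega⟩
  obtain ⟨n, rfl⟩ : ∃ n, q = n + 2 := ⟨q - 2, by omega⟩
  refine ⟨(List.range' 1 (m + 2)).formPerm, (List.range' 0 (n + 2)).formPerm, ?_, ?_, ?_⟩
  · simpa using List.formPerm_pow_length_eq_one_of_nodup (l := List.range' 1 (m + 2))
      List.nodup_range'
  · simpa using List.formPerm_pow_length_eq_one_of_nodup (l := List.range' 0 (n + 2))
      List.nodup_range'
  · intro h
    have hx0 : (List.range' 1 (m + 2)).formPerm 0 = 0 :=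
      List.formPerm_apply_of_notMem (by simp)
    have hx1 : (List.range' 1 (m + 2)).formPerm 1 = 2 :=
      List.formPerm_apply_head _ _ _ (List.nodup_range' (s := 1) (n := m + 2))
    have hy0 : (List.range' 0 (n + 2)).formPerm 0 = 1 :=
      List.formPerm_apply_head _ _ _ (List.nodup_range' (s := 0) (n := n + 2))
    have := congrArg (· 0) h.eq
    simp only [Equiv.Perm.mul_apply, hx0, hx1, hy0] at this
    omega

namespace torusKnotGroup

def a (p q : ℕ) : torusKnotGroup p q := PresentedGroup.of true

def b (p q : ℕ) : torusKnotGroup p q := PresentedGroup.of false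

variable {p q : ℕ}

theorem a_pow_eq_b_pow : a p q ^ p = b p q ^ q :=
  PresentedGroup.mk_eq_mk_of_mul_inv_mem rfl

theorem not_commute_a_b (hp : 2 ≤ p) (hq : 2 ≤ q) : ¬Commute (a p q) (b p q) := by
  obtain ⟨x, y, hx, hy, hxy⟩ := Equiv.Perm.exists_pow_eq_one_not_commute hp hq
  have hrel : ∀ r ∈ ({FreeGroup.of true ^ p * (FreeGroup.of false ^ q)⁻¹} : Set (FreeGroup Bool)),
      FreeGroup.lift (fun i => cond i x y) r = 1 := by
    rintro r rfl
    simp [hx, hy]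
  let φ : torusKnotGroup p q →* Equiv.Perm ℕ := PresentedGroup.toGroup hrel
  have hφa : φ (a p q) = x := PresentedGroup.toGroup.of hrel
  have hφb : φ (b p q) = y := PresentedGroup.toGroup.of hrel
  intro h
  exact hxy (by simpa only [hφa, hφb] using h.map φ)

end torusKnotGroup

theorem torusKnotGroup_not_biOrderable_general (p q : ℕ) (hp : 2 ≤ p) (hq : 2 ≤ q) :
    ¬ BiOrderable (torusKnotGroup p q) := fun hG =>
  torusKnotGroup.not_commute_a_b hp hq <|
    hG.commute_of_commute_pow (n := p) (by omega) <| by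
      rw [torusKnotGroup.a_pow_eq_b_pow]
      exact (Commute.refl _).pow_left q

/-- for relatively prime `p, q ≥ 2`, the torus knot group
`⟨a, b ∣ aᵖ = b^q⟩` is not bi-orderable. -/
theorem torusKnotGroup_not_biOrderable (p q : ℕ) (hp : 2 ≤ p) (hq : 2 ≤ q)
    (hpq : Nat.Coprime p q) : ¬ BiOrderable (torusKnotGroup p q) :=
  torusKnotGroup_not_biOrderable_general p q hp hq
end

section
/- The fundamental group of the Weeks manifold, given by the presentation ⟨a, b ∣ babab = ab⁻²a, ababa = ba⁻²b⟩ (the presented group on two generators with relators babab·(ab⁻²a)⁻¹ and ababa·(ba⁻²b)⁻¹), is not left-orderable: it admits no left-invariant strict linear order. -/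
namespace WeeksManifold

/-- Generator `a` of the Weeks manifold group presentation. -/
def a : FreeGroup Bool := FreeGroup.of true

/-- Generator `b` of the Weeks manifold group presentation. -/
def b : FreeGroup Bool := FreeGroup.of false

/-- The relators `babab·(ab⁻²a)⁻¹` and `ababa·(ba⁻²b)⁻¹` of the fundamental
group of the Weeks manifold. -/
def rels : Set (FreeGroup Bool) :=
  {b * a * b * a * b * (a * b⁻¹ * b⁻¹ * a)⁻¹,
   a * b * a * b * a * (b * a⁻¹ * a⁻¹ * b)⁻¹}

end WeeksManifold

private lemma certPN {G : Type*} [Group G] (a b : G)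
    (hr1 : b*a*b*a*b*a⁻¹*b*b*a⁻¹ = 1) (hr2 : a*b*a*b*a*b⁻¹*a*a*b⁻¹ = 1) :
    b⁻¹*a*a*b⁻¹*a*a*b⁻¹*b⁻¹*a*b⁻¹ = 1 := by
  calc b⁻¹*a*a*b⁻¹*a*a*b⁻¹*b⁻¹*a*b⁻¹
    _ = 1 * (a*b*a*b*a)⁻¹ * (a*b*a*b*a*b⁻¹*a*a*b⁻¹) * a*b*a*b*a * a⁻¹*b⁻¹*a⁻¹*b⁻¹*a*b⁻¹*b⁻¹*a*b⁻¹ := by group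
    _ = a⁻¹*b⁻¹*a⁻¹*b⁻¹*a*b⁻¹*b⁻¹*a*b⁻¹ := by rw [hr2]; group
    _ = 1 * (a*b⁻¹*b⁻¹*a*b⁻¹)⁻¹ * (b*a*b*a*b*a⁻¹*b*b*a⁻¹)⁻¹ * a*b⁻¹*b⁻¹*a*b⁻¹ * 1 := by group
    _ = 1 := by rw [hr1]; group

private lemma certNP {G : Type*} [Group G] (a b : G)
    (hr1 : b*a*b*a*b*a⁻¹*b*b*a⁻¹ = 1) (hr2 : a*b*a*b*a*b⁻¹*a*a*b⁻¹ = 1) :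
    a⁻¹*a⁻¹*b*a⁻¹*a⁻¹*b*b*a⁻¹*b*b = 1 := by
  calc a⁻¹*a⁻¹*b*a⁻¹*a⁻¹*b*b*a⁻¹*b*b
    _ = a⁻¹*a⁻¹*b*a⁻¹ * (b*a*b*a*b)⁻¹ * (b*a*b*a*b*a⁻¹*b*b*a⁻¹) * b*a*b*a*b * b⁻¹*a⁻¹*b⁻¹*a⁻¹*b := by group
    _ = a⁻¹*a⁻¹*b*a⁻¹*b⁻¹*a⁻¹*b⁻¹*a⁻¹*b := by rw [hr1]; group
    _ = 1 * (b)⁻¹ * (a*b*a*b*a*b⁻¹*a*a*b⁻¹)⁻¹ * b * 1 := by group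
    _ = 1 := by rw [hr2]; group

private lemma certPP1 {G : Type*} [Group G] (a b : G)
    (hr1 : b*a*b*a*b*a⁻¹*b*b*a⁻¹ = 1) (hr2 : a*b*a*b*a*b⁻¹*a*a*b⁻¹ = 1) :
    a*b*a*b*a⁻¹*b*b*a⁻¹*b = 1 := by
  calc a*b*a*b*a⁻¹*b*b*a⁻¹*b
    _ = 1 * (b)⁻¹ * (b*a*b*a*b*a⁻¹*b*b*a⁻¹) * b * 1 := by group
    _ = 1 := by rw [hr1]; group

private lemma certPP2 {G : Type*} [Group G] (a b : G)
    (hr1 : b*a*b*a*b*a⁻¹*b*b*a⁻¹ = 1) (hr2 : a*b*a*b*a*b⁻¹*a*a*b⁻¹ = 1) :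
    a*b*a*b⁻¹*a*a*b⁻¹*a*b = 1 := by
  calc a*b*a*b⁻¹*a*a*b⁻¹*a*b
    _ = 1 * (a*b)⁻¹ * (a*b*a*b*a*b⁻¹*a*a*b⁻¹) * a*b * 1 := by group
    _ = 1 := by rw [hr2]; group

private lemma certNN1 {G : Type*} [Group G] (a b : G)
    (hr1 : b*a*b*a*b*a⁻¹*b*b*a⁻¹ = 1) (hr2 : a*b*a*b*a*b⁻¹*a*a*b⁻¹ = 1) :
    a⁻¹*b⁻¹*a⁻¹*b⁻¹*a⁻¹*b*a⁻¹*a⁻¹*b = 1 := by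
  calc a⁻¹*b⁻¹*a⁻¹*b⁻¹*a⁻¹*b*a⁻¹*a⁻¹*b
    _ = 1 * (b*a⁻¹*a⁻¹*b)⁻¹ * (a*b*a*b*a*b⁻¹*a*a*b⁻¹)⁻¹ * b*a⁻¹*a⁻¹*b * 1 := by group
    _ = 1 := by rw [hr2]; group

private lemma certNN2 {G : Type*} [Group G] (a b : G)
    (hr1 : b*a*b*a*b*a⁻¹*b*b*a⁻¹ = 1) (hr2 : a*b*a*b*a*b⁻¹*a*a*b⁻¹ = 1) :
    a⁻¹*b⁻¹*a⁻¹*b⁻¹*a*b⁻¹*b⁻¹*a*b⁻¹ = 1 := by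
  calc a⁻¹*b⁻¹*a⁻¹*b⁻¹*a*b⁻¹*b⁻¹*a*b⁻¹
    _ = 1 * (a*b⁻¹*b⁻¹*a*b⁻¹)⁻¹ * (b*a*b*a*b*a⁻¹*b*b*a⁻¹)⁻¹ * a*b⁻¹*b⁻¹*a*b⁻¹ * 1 := by group
    _ = 1 := by rw [hr1]; group


private lemma not_LO_aux {G : Type*} [Group G] (a b : G)
    (h1 : b*a*b*a*b = a*b⁻¹*b⁻¹*a) (h2 : a*b*a*b*a = b*a⁻¹*a⁻¹*b)
    (ha : a ≠ 1) (hb : b ≠ 1) : ¬ LeftOrderable G := by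
  rintro ⟨r, hsto, hmul⟩
  haveI := hsto
  have hr1 : b*a*b*a*b*a⁻¹*b*b*a⁻¹ = 1 := by rw [h1]; group
  have hr2 : a*b*a*b*a*b⁻¹*a*a*b⁻¹ = 1 := by rw [h2]; group
  have pos_mul : ∀ x y : G, r 1 x → r 1 y → r 1 (x*y) := by
    intro x y hx hy
    have h' := hmul x 1 y hy
    rw [mul_one] at h'
    exact trans_of r hx h'
  have pos_inv : ∀ x : G, r x 1 → r 1 x⁻¹ := by
    intro x hx
    have h' := hmul x⁻¹ x 1 hx
    rwa [inv_mul_cancel, mul_one] at h'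
  have npo : ¬ r 1 (1 : G) := irrefl_of r 1
  have h5 : a = b → a*a*a*a*a = 1 := by
    intro he; rw [← he] at h1; rw [h1]; group
  rcases trichotomous_of r a 1 with hA | hA | hA
  · -- a⁻¹ positive
    have Pa := pos_inv a hA
    rcases trichotomous_of r b 1 with hB | hB | hB
    · -- b⁻¹ positive : case NN, branch on a vs b
      have Pb := pos_inv b hB
      rcases trichotomous_of r a b with hC | hC | hC
      · -- a⁻¹*b positive
        have Pc : r 1 (a⁻¹*b) := by
          have h' := hmul a⁻¹ a b hC; rwa [inv_mul_cancel] at h'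
        have hp : r 1 (a⁻¹*b⁻¹*a⁻¹*b⁻¹*(a⁻¹*b)*a⁻¹*(a⁻¹*b)) :=
          pos_mul _ _ (pos_mul _ _ (pos_mul _ _ (pos_mul _ _ (pos_mul _ _
            (pos_mul _ _ Pa Pb) Pa) Pb) Pc) Pa) Pc
        have he : a⁻¹*b⁻¹*a⁻¹*b⁻¹*(a⁻¹*b)*a⁻¹*(a⁻¹*b) = 1 := by
          calc a⁻¹*b⁻¹*a⁻¹*b⁻¹*(a⁻¹*b)*a⁻¹*(a⁻¹*b)
              = a⁻¹*b⁻¹*a⁻¹*b⁻¹*a⁻¹*b*a⁻¹*a⁻¹*b := by group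
            _ = 1 := certNN1 a b hr1 hr2
        rw [he] at hp; exact npo hp
      · -- a = b
        have h5' : a⁻¹*a⁻¹*a⁻¹*a⁻¹*a⁻¹ = 1 := by
          rw [show a⁻¹*a⁻¹*a⁻¹*a⁻¹*a⁻¹ = (a*a*a*a*a)⁻¹ by group, h5 hC]; group
        have hp : r 1 (a⁻¹*a⁻¹*a⁻¹*a⁻¹*a⁻¹) :=
          pos_mul _ _ (pos_mul _ _ (pos_mul _ _ (pos_mul _ _ Pa Pa) Pa) Pa) Pa
        rw [h5'] at hp; exact npo hp
      · -- b⁻¹*a positive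
        have Pc : r 1 (b⁻¹*a) := by
          have h' := hmul b⁻¹ b a hC; rwa [inv_mul_cancel] at h'
        have hp : r 1 (a⁻¹*b⁻¹*a⁻¹*(b⁻¹*a)*b⁻¹*(b⁻¹*a)*b⁻¹) :=
          pos_mul _ _ (pos_mul _ _ (pos_mul _ _ (pos_mul _ _ (pos_mul _ _
            (pos_mul _ _ Pa Pb) Pa) Pc) Pb) Pc) Pb
        have he : a⁻¹*b⁻¹*a⁻¹*(b⁻¹*a)*b⁻¹*(b⁻¹*a)*b⁻¹ = 1 := by
          calc a⁻¹*b⁻¹*a⁻¹*(b⁻¹*a)*b⁻¹*(b⁻¹*a)*b⁻¹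
              = a⁻¹*b⁻¹*a⁻¹*b⁻¹*a*b⁻¹*b⁻¹*a*b⁻¹ := by group
            _ = 1 := certNN2 a b hr1 hr2
        rw [he] at hp; exact npo hp
    · exact hb hB
    · -- a⁻¹, b positive : case NP
      have Pb := hB
      have hp : r 1 (a⁻¹*a⁻¹*b*a⁻¹*a⁻¹*b*b*a⁻¹*b*b) :=
        pos_mul _ _ (pos_mul _ _ (pos_mul _ _ (pos_mul _ _ (pos_mul _ _ (pos_mul _ _
          (pos_mul _ _ (pos_mul _ _ (pos_mul _ _ Pa Pa) Pb) Pa) Pa) Pb) Pb) Pa) Pb) Pb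
      rw [certNP a b hr1 hr2] at hp; exact npo hp
  · exact ha hA
  · -- a positive
    have Pa := hA
    rcases trichotomous_of r b 1 with hB | hB | hB
    · -- a positive, b⁻¹ positive : case PN
      have Pb := pos_inv b hB
      have hp : r 1 (b⁻¹*a*a*b⁻¹*a*a*b⁻¹*b⁻¹*a*b⁻¹) :=
        pos_mul _ _ (pos_mul _ _ (pos_mul _ _ (pos_mul _ _ (pos_mul _ _ (pos_mul _ _
          (pos_mul _ _ (pos_mul _ _ (pos_mul _ _ Pb Pa) Pa) Pb) Pa) Pa) Pb) Pb) Pa) Pb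
      rw [certPN a b hr1 hr2] at hp; exact npo hp
    · exact hb hB
    · -- a, b positive : case PP, branch on a vs b
      have Pb := hB
      rcases trichotomous_of r a b with hC | hC | hC
      · have Pc : r 1 (a⁻¹*b) := by
          have h' := hmul a⁻¹ a b hC; rwa [inv_mul_cancel] at h'
        have hp : r 1 (a*b*a*b*(a⁻¹*b)*b*(a⁻¹*b)) :=
          pos_mul _ _ (pos_mul _ _ (pos_mul _ _ (pos_mul _ _ (pos_mul _ _
            (pos_mul _ _ Pa Pb) Pa) Pb) Pc) Pb) Pc
        have he : a*b*a*b*(a⁻¹*b)*b*(a⁻¹*b) = 1 := by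
          calc a*b*a*b*(a⁻¹*b)*b*(a⁻¹*b)
              = a*b*a*b*a⁻¹*b*b*a⁻¹*b := by group
            _ = 1 := certPP1 a b hr1 hr2
        rw [he] at hp; exact npo hp
      · have hp : r 1 (a*a*a*a*a) :=
          pos_mul _ _ (pos_mul _ _ (pos_mul _ _ (pos_mul _ _ Pa Pa) Pa) Pa) Pa
        rw [h5 hC] at hp; exact npo hp
      · have Pc : r 1 (b⁻¹*a) := by
          have h' := hmul b⁻¹ b a hC; rwa [inv_mul_cancel] at h'
        have hp : r 1 (a*b*a*(b⁻¹*a)*a*(b⁻¹*a)*b) :=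
          pos_mul _ _ (pos_mul _ _ (pos_mul _ _ (pos_mul _ _ (pos_mul _ _
            (pos_mul _ _ Pa Pb) Pa) Pc) Pa) Pc) Pb
        have he : a*b*a*(b⁻¹*a)*a*(b⁻¹*a)*b = 1 := by
          calc a*b*a*(b⁻¹*a)*a*(b⁻¹*a)*b
              = a*b*a*b⁻¹*a*a*b⁻¹*a*b := by group
            _ = 1 := certPP2 a b hr1 hr2
        rw [he] at hp; exact npo hp

/-- the fundamental group
`⟨a, b ∣ babab = ab⁻²a, ababa = ba⁻²b⟩` of the Weeks manifold is not
left-orderable. -/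
theorem weeksManifoldGroup_not_leftOrderable :
    ¬ LeftOrderable (PresentedGroup WeeksManifold.rels) := by
  have hrel : ∀ w ∈ WeeksManifold.rels,
      PresentedGroup.mk WeeksManifold.rels w = 1 := fun w hw =>
    (QuotientGroup.eq_one_iff w).mpr (Subgroup.subset_normalClosure hw)
  set A : PresentedGroup WeeksManifold.rels :=
    PresentedGroup.mk WeeksManifold.rels (FreeGroup.of true) with hAdef
  set B : PresentedGroup WeeksManifold.rels :=
    PresentedGroup.mk WeeksManifold.rels (FreeGroup.of false) with hBdef
  have e1 := hrel _ (Set.mem_insert _ _)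
  have e2 := hrel _ (Set.mem_insert_of_mem _ rfl)
  simp only [WeeksManifold.a, WeeksManifold.b, map_mul, map_inv, ← hAdef, ← hBdef] at e1 e2
  rw [mul_inv_eq_one] at e1 e2
  -- nontriviality of A and B via homomorphisms to `Multiplicative (ZMod 5)`
  have hfa : ∀ w ∈ WeeksManifold.rels,
      FreeGroup.lift (fun x => if x then Multiplicative.ofAdd (1 : ZMod 5) else 1) w = 1 := by
    rintro w (rfl | rfl) <;>
      simp only [WeeksManifold.a, WeeksManifold.b, map_mul, map_inv, FreeGroup.lift_apply_of] <;>
      decide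
  have hfb : ∀ w ∈ WeeksManifold.rels,
      FreeGroup.lift (fun x => if x then 1 else Multiplicative.ofAdd (1 : ZMod 5)) w = 1 := by
    rintro w (rfl | rfl) <;>
      simp only [WeeksManifold.a, WeeksManifold.b, map_mul, map_inv, FreeGroup.lift_apply_of] <;>
      decide
  have hA : A ≠ 1 := by
    intro h
    have h2 : (PresentedGroup.toGroup hfa) A = Multiplicative.ofAdd (1 : ZMod 5) :=
      PresentedGroup.toGroup.of hfa
    rw [h, map_one (PresentedGroup.toGroup hfa)] at h2
    exact absurd h2 (by decide)
  have hB : B ≠ 1 := by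
    intro h
    have h2 : (PresentedGroup.toGroup hfb) B = Multiplicative.ofAdd (1 : ZMod 5) :=
      PresentedGroup.toGroup.of hfb
    rw [h, map_one (PresentedGroup.toGroup hfb)] at h2
    exact absurd h2 (by decide)
  exact not_LO_aux A B e1 e2 hA hB
end

section
/- For every n ≥ 5, the Artin braid group B_n is not locally indicable: there exists a nontrivial finitely generated subgroup of B_n that admits no surjective homomorphism onto ℤ. -/
/-- The braid relators on `n - 1` generators `σ₀, …, σ_{n-2}`:
`σᵢσⱼσᵢ⁻¹σⱼ⁻¹` for `|i - j| > 1` and `σᵢσⱼσᵢ(σⱼσᵢσⱼ)⁻¹` for `|i - j| = 1`. -/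
def braidRels (n : ℕ) : Set (FreeGroup (Fin (n - 1))) :=
  {w | (∃ i j : Fin (n - 1), 1 < |(i : ℤ) - (j : ℤ)| ∧
          w = FreeGroup.of i * FreeGroup.of j *
              (FreeGroup.of j * FreeGroup.of i)⁻¹) ∨
       (∃ i j : Fin (n - 1), |(i : ℤ) - (j : ℤ)| = 1 ∧
          w = FreeGroup.of i * FreeGroup.of j * FreeGroup.of i *
              (FreeGroup.of j * FreeGroup.of i * FreeGroup.of j)⁻¹)}

/-- The Artin braid group `B_n`, presented with generators `σ₁, …, σ_{n-1}` and
the braid relations. -/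
def BraidGroup (n : ℕ) : Type := PresentedGroup (braidRels n)

instance (n : ℕ) : Group (BraidGroup n) := by
  unfold BraidGroup; infer_instance

/-!
The subgroup of `B_n` generated by `u = σ₂σ₁⁻¹`, `v = σ₁σ₂σ₁⁻²`, `p = σ₃σ₁⁻¹` and `q = σ₄σ₁⁻¹`
(these generate the commutator subgroup, by Gorin and Lin) is perfect: the braid relations give
`u = [v, q⁻¹]`, `v = [q, u⁻¹]`, `v⁻¹pv = u⁻¹pup` and `pqp = qpq`, which express each generator
through commutators and generators already known to lie in the commutator subgroup. A perfect
group has no nontrivial abelian quotient, in particular no surjection onto `ℤ`. The subgroup is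
nontrivial because distinct generators `σᵢ` act on `ℕ` as distinct adjacent transpositions.
-/

open Subgroup
open scoped commutatorElement

theorem Group.IsPerfect.not_surjective {G : Type*} [Group G] [Group.IsPerfect G] {A : Type*}
    [CommGroup A] [Nontrivial A] (φ : G →* A) : ¬ Function.Surjective φ := fun hφ =>
  have := Group.IsPerfect.ofSurjective hφ
  not_subsingleton A inferInstance

theorem Equiv.swap_braid {α : Type*} [DecidableEq α] {a b c : α} (hab : a ≠ b) (hbc : b ≠ c)
    (hac : a ≠ c) :
    swap a b * swap b c * swap a b = swap b c * swap a b * swap b c := by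
  rw [swap_mul_swap_mul_swap hab hac, swap_comm a b, swap_comm b c,
    swap_mul_swap_mul_swap hbc.symm hac.symm, swap_comm]

section BraidRelations

variable {G : Type*} [Group G] {x y z w : G}

theorem isPerfect_closure_of_gorinLin_relations {u v p q : G} (hu : u = ⁅v, q⁻¹⁆)
    (hv : v = ⁅q, u⁻¹⁆) (hp : v⁻¹ * p * v = u⁻¹ * p * u * p) (hq : p * q * p = q * p * q) :
    Group.IsPerfect (closure {u, v, p, q}) := by
  set H := closure ({u, v, p, q} : Set G)
  have mem : ∀ g ∈ ({u, v, p, q} : Set G), g ∈ H := fun g hg => subset_closure hg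
  have memInv : ∀ g ∈ ({u, v, p, q} : Set G), g⁻¹ ∈ H := fun g hg => H.inv_mem (mem g hg)
  have hp' : p = ⁅u⁻¹, p⁻¹⁆ * ⁅p⁻¹, v⁻¹⁆ := calc
    p = (u⁻¹ * p * u)⁻¹ * (u⁻¹ * p * u * p) := by simp [mul_assoc]
    _ = (u⁻¹ * p * u)⁻¹ * (v⁻¹ * p * v) := by rw [hp]
    _ = ⁅u⁻¹, p⁻¹⁆ * ⁅p⁻¹, v⁻¹⁆ := by simp [commutatorElement_def, mul_assoc]
  have hq' : q = ⁅p⁻¹, q⁻¹⁆ * p := calc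
    q = p⁻¹ * q⁻¹ * (q * p * q) := by simp [mul_assoc]
    _ = p⁻¹ * q⁻¹ * (p * q * p) := by rw [hq]
    _ = ⁅p⁻¹, q⁻¹⁆ * p := by simp [commutatorElement_def, mul_assoc]
  have hpH : p ∈ ⁅H, H⁆ := hp' ▸ mul_mem
    (commutator_mem_commutator (memInv u (by simp)) (memInv p (by simp)))
    (commutator_mem_commutator (memInv p (by simp)) (memInv v (by simp)))
  rw [isPerfect_iff]
  refine le_antisymm (commutator_le_self H) (closure_le _ |>.mpr ?_)
  simp only [Set.insert_subset_iff, Set.singleton_subset_iff, SetLike.mem_coe]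
  refine ⟨?_, ?_, hpH, ?_⟩
  · exact hu ▸ commutator_mem_commutator (mem v (by simp)) (memInv q (by simp))
  · exact hv ▸ commutator_mem_commutator (mem q (by simp)) (memInv u (by simp))
  · exact hq' ▸ mul_mem (commutator_mem_commutator (memInv p (by simp)) (memInv q (by simp))) hpH

theorem braid_mul_mul_inv (h : x * y * x = y * x * y) : x * y * x⁻¹ = y⁻¹ * x * y := calc
  x * y * x⁻¹ = y⁻¹ * (y * x * y) * x⁻¹ := by simp [mul_assoc]
  _ = y⁻¹ * x * y := by rw [← h]; simp [mul_assoc]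

theorem braid_mul_inv_mul_inv (h : x * y * x = y * x * y) : x * y⁻¹ * x⁻¹ = y⁻¹ * x⁻¹ * y := calc
  x * y⁻¹ * x⁻¹ = (x * y * x⁻¹)⁻¹ := by simp [mul_assoc]
  _ = y⁻¹ * x⁻¹ * y := by rw [braid_mul_mul_inv h]; simp [mul_assoc]

theorem braid_mul_right_of_commute (hxz : Commute x z) (hyz : Commute y z)
    (h : x * y * x = y * x * y) : x * z * (y * z) * (x * z) = y * z * (x * z) * (y * z) := by
  have h₁ : ∀ a b : G, Commute a z → Commute b z →
      a * z * (b * z) * (a * z) = a * b * a * (z * z * z) := fun a b ha hb => by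
    rw [hb.symm.mul_mul_mul_comm, (ha.symm.mul_left ha.symm).mul_mul_mul_comm]
  rw [h₁ x y hxz hyz, h₁ y x hyz hxz, h]

theorem gorinLin_relation_u (hxy : x * y * x = y * x * y) (hxw : Commute x w)
    (hyw : Commute y w) :
    y * x⁻¹ = ⁅x * y * x⁻¹ * x⁻¹, (w * x⁻¹)⁻¹⁆ := by
  have hvw : Commute (x * y * x⁻¹ * x⁻¹) w :=
    ((hxw.mul_left hyw).mul_left hxw.inv_left).mul_left hxw.inv_left
  calc y * x⁻¹ = x * y * x * y⁻¹ * x⁻¹ * x⁻¹ := by rw [hxy]; simp [mul_assoc]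
    _ = x * y * x⁻¹ * x⁻¹ * x * (x * y * x⁻¹ * x⁻¹)⁻¹ * x⁻¹ := by simp [mul_assoc]
    _ = x * y * x⁻¹ * x⁻¹ * x * (w⁻¹ * (x * y * x⁻¹ * x⁻¹)⁻¹ * w) * x⁻¹ := by
      rw [hvw.inv_inv.symm.eq]; simp [mul_assoc]
    _ = ⁅x * y * x⁻¹ * x⁻¹, (w * x⁻¹)⁻¹⁆ := by rw [commutatorElement_def]; simp [mul_assoc]

theorem gorinLin_relation_v (hxy : x * y * x = y * x * y) (hxw : Commute x w)
    (hyw : Commute y w) :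
    x * y * x⁻¹ * x⁻¹ = ⁅w * x⁻¹, (y * x⁻¹)⁻¹⁆ := calc
  x * y * x⁻¹ * x⁻¹ = y⁻¹ * x * y * x⁻¹ := by rw [braid_mul_mul_inv hxy]
  _ = w * (y⁻¹ * x) * w⁻¹ * y * x⁻¹ := by
    rw [(hyw.inv_left.mul_left hxw).symm.eq]; simp [mul_assoc]
  _ = ⁅w * x⁻¹, (y * x⁻¹)⁻¹⁆ := by rw [commutatorElement_def]; simp [mul_assoc]

theorem gorinLin_relation_p (hxy : x * y * x = y * x * y) (hyz : y * z * y = z * y * z)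
    (hxz : Commute x z) :
    (x * y * x⁻¹ * x⁻¹)⁻¹ * (z * x⁻¹) * (x * y * x⁻¹ * x⁻¹) =
      (y * x⁻¹)⁻¹ * (z * x⁻¹) * (y * x⁻¹) * (z * x⁻¹) := by
  have hxz' : x⁻¹ * z = z * x⁻¹ := hxz.inv_left.eq
  calc (x * y * x⁻¹ * x⁻¹)⁻¹ * (z * x⁻¹) * (x * y * x⁻¹ * x⁻¹)
      = x * (y⁻¹ * x⁻¹ * y) * z * y * x⁻¹ * x⁻¹ := by
        rw [← braid_mul_inv_mul_inv hxy]; simp [mul_assoc]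
    _ = x * y⁻¹ * x⁻¹ * (y * z * y) * x⁻¹ * x⁻¹ := by simp [mul_assoc]
    _ = x * y⁻¹ * (x⁻¹ * z) * y * z * x⁻¹ * x⁻¹ := by rw [hyz]; simp [mul_assoc]
    _ = x * y⁻¹ * z * x⁻¹ * y * (x⁻¹ * z) * x⁻¹ := by rw [hxz']; simp [mul_assoc]
    _ = (y * x⁻¹)⁻¹ * (z * x⁻¹) * (y * x⁻¹) * (z * x⁻¹) := by simp [mul_assoc]

theorem isPerfect_closure_of_braid (hxy : x * y * x = y * x * y) (hyz : y * z * y = z * y * z)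
    (hzw : z * w * z = w * z * w) (hxz : Commute x z) (hxw : Commute x w) (hyw : Commute y w) :
    Group.IsPerfect (closure {y * x⁻¹, x * y * x⁻¹ * x⁻¹, z * x⁻¹, w * x⁻¹}) :=
  isPerfect_closure_of_gorinLin_relations (gorinLin_relation_u hxy hxw hyw)
    (gorinLin_relation_v hxy hxw hyw) (gorinLin_relation_p hxy hyz hxz)
    (braid_mul_right_of_commute hxz.inv_left.symm hxw.inv_left.symm hzw)

end BraidRelations

namespace BraidGroup

variable {n : ℕ}

def σ (i : Fin (n - 1)) : BraidGroup n := PresentedGroup.of i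

theorem σ_commute {i j : Fin (n - 1)} (h : 1 < |(i : ℤ) - j|) : Commute (σ i) (σ j) := by
  have := PresentedGroup.one_of_mem (rels := braidRels n) (Or.inl ⟨i, j, h, rfl⟩)
  rw [map_mul, map_inv, map_mul] at this
  exact mul_inv_eq_one.mp this

theorem σ_braid {i j : Fin (n - 1)} (h : |(i : ℤ) - j| = 1) :
    σ i * σ j * σ i = σ j * σ i * σ j := by
  have := PresentedGroup.one_of_mem (rels := braidRels n) (Or.inr ⟨i, j, h, rfl⟩)
  rw [map_mul, map_inv, map_mul, map_mul] at this
  exact mul_inv_eq_one.mp this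

def adjSwap (i : Fin (n - 1)) : Equiv.Perm ℕ := Equiv.swap i (i + 1)

theorem lift_adjSwap_eq_one_of_mem_braidRels :
    ∀ r ∈ braidRels n, FreeGroup.lift adjSwap r = 1 := by
  rintro r (⟨i, j, hij, rfl⟩ | ⟨i, j, hij, rfl⟩) <;>
    simp only [map_mul, map_inv, FreeGroup.lift_apply_of, mul_inv_eq_one]
  · have := lt_abs.mp hij
    exact (Equiv.Perm.disjoint_swap_swap (by simp; omega)).commute.eq
  · rcases (abs_eq zero_le_one).mp hij with h | h
    · have hi : (i : ℕ) = j + 1 := by omega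
      simp only [adjSwap, hi]
      exact (Equiv.swap_braid (by omega) (by omega) (by omega)).symm
    · have hj : (j : ℕ) = i + 1 := by omega
      simp only [adjSwap, hj]
      exact Equiv.swap_braid (by omega) (by omega) (by omega)

def toPerm : BraidGroup n →* Equiv.Perm ℕ :=
  PresentedGroup.toGroup lift_adjSwap_eq_one_of_mem_braidRels

theorem toPerm_σ (i : Fin (n - 1)) : toPerm (σ i) = adjSwap i := PresentedGroup.toGroup.of _

theorem σ_injective : Function.Injective (σ : Fin (n - 1) → BraidGroup n) := by
  intro i j h
  have := congrArg (toPerm · i) h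
  simp only [toPerm_σ, adjSwap, Equiv.swap_apply_left, Equiv.swap_apply_def] at this
  ext
  split_ifs at this <;> omega

end BraidGroup

/-- for every `n ≥ 5`, the braid group `B_n` is not locally
indicable: it has a nontrivial finitely generated subgroup admitting no
surjection onto `ℤ`. -/
theorem braidGroup_not_locallyIndicable (n : ℕ) (hn : 5 ≤ n) :
    ∃ H : Subgroup (BraidGroup n), H.FG ∧ H ≠ ⊥ ∧
      ∀ φ : H →* Multiplicative ℤ, ¬ Function.Surjective φ := by
  open BraidGroup in
  let x := σ (n := n) ⟨0, by omega⟩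
  let y := σ (n := n) ⟨1, by omega⟩
  let z := σ (n := n) ⟨2, by omega⟩
  let w := σ (n := n) ⟨3, by omega⟩
  have := isPerfect_closure_of_braid (x := x) (y := y) (z := z) (w := w)
    (σ_braid (by simp)) (σ_braid (by simp)) (σ_braid (by simp))
    (σ_commute (by simp)) (σ_commute (by simp)) (σ_commute (by simp))
  have hu : y * x⁻¹ ≠ 1 := mul_inv_eq_one.not.mpr (σ_injective.ne (by simp))
  refine ⟨closure {y * x⁻¹, x * y * x⁻¹ * x⁻¹, z * x⁻¹, w * x⁻¹},
    (fg_iff _).mpr ⟨_, rfl, Set.toFinite _⟩, ?_,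
    fun φ => Group.IsPerfect.not_surjective φ⟩
  rw [Ne, closure_eq_bot_iff]
  exact fun h => hu (h (by simp))
end

section
/- (Sikora) Let n ≥ 2 and let G = ℤⁿ. For every positive cone P of an ordering of G and every finite subset S ⊆ P, there exists a positive cone P′ of an ordering of G with P′ ≠ P and S ⊆ P′. (Hence the space of orderings of ℤⁿ has no isolated points, and is homeomorphic to the Cantor set.) -/
/-!
Every finite subset `S` of a positive cone `P` of `ℤⁿ` is *pointed*: no nontrivial nonnegative
integer combination of `S` vanishes, since it would lie in `P`. By Gordan's theorem, which holds
over any ordered ring through a division-free Farkas lemma, some integer functional `v` is strictly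
positive on `S`. As `n ≥ 2`, `v` kills some nonzero `z ∈ P`, and `w = M v - z` with `M` large is
still nonnegative on `S` but negative at `z`. Ordering `ℤⁿ` first by `w` and then by `P` gives a
positive cone containing `S` but not `z`.
-/

open Matrix Finset

/-- A positive cone of a (bi-invariant) ordering of an additive abelian group:
a subset closed under addition such that every nonzero element lies in exactly
one of `P` and `-P` (and `0 ∉ P`). -/
def IsPositiveCone {A : Type*} [AddCommGroup A] (P : Set A) : Prop :=
  (0 : A) ∉ P ∧ (∀ a ∈ P, ∀ b ∈ P, a + b ∈ P) ∧
    ∀ a : A, a ≠ 0 → Xor' (a ∈ P) (-a ∈ P)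

theorem sum_insert_update_smul {R M κ : Type*} [SMul R M] [AddCommMonoid M] [DecidableEq κ]
    {s : Finset κ} {t : κ} (ht : t ∉ s) (l : κ → R) (μ : R) (a : κ → M) :
    ∑ i ∈ insert t s, Function.update l t μ i • a i = μ • a t + ∑ i ∈ s, l i • a i := by
  rw [sum_insert ht, Function.update_self]
  congr 1
  exact sum_congr rfl fun i hi => by rw [Function.update_of_ne (ne_of_mem_of_not_mem hi ht)]

section Farkas

variable {R ι κ : Type*} [CommRing R] [Fintype ι]

/-- The projection `x ↦ (u ⬝ᵥ x) • t - (u ⬝ᵥ t) • x` onto the kernel of `u ⬝ᵥ ·` along `t`,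
scaled by `-(u ⬝ᵥ t)` so that no division occurs. -/
def kerProj (u t x : ι → R) : ι → R := (u ⬝ᵥ x) • t - (u ⬝ᵥ t) • x

theorem kerProj_self (u t : ι → R) : kerProj u t t = 0 := sub_self _

theorem dotProduct_kerProj (u t w x : ι → R) :
    w ⬝ᵥ kerProj u t x = ((w ⬝ᵥ t) • u - (u ⬝ᵥ t) • w) ⬝ᵥ x := by
  simp only [kerProj, dotProduct_sub, sub_dotProduct, dotProduct_smul, smul_dotProduct,
    smul_eq_mul]
  ring

theorem sum_smul_kerProj (u t : ι → R) (s : Finset κ) (c : κ → R) (a : κ → ι → R) :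
    ∑ i ∈ s, c i • kerProj u t (a i) =
      (∑ i ∈ s, c i * u ⬝ᵥ a i) • t - (u ⬝ᵥ t) • ∑ i ∈ s, c i • a i := by
  simp only [kerProj, smul_sub, sum_sub_distrib, sum_smul, smul_sum, smul_smul, mul_comm]

variable [LinearOrder R] [IsStrictOrderedRing R]

theorem dotProduct_self_pos {v : ι → R} (hv : v ≠ 0) : 0 < v ⬝ᵥ v :=
  (sum_nonneg fun i _ => mul_self_nonneg (v i)).lt_of_ne' (dotProduct_self_eq_zero.not.mpr hv)

theorem exists_smul_eq_sum_or_exists_dotProduct_neg [DecidableEq κ] (s : Finset κ)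
    (a : κ → ι → R) (b : ι → R) :
    (∃ c : R, 0 < c ∧ ∃ l : κ → R, (∀ i, 0 ≤ l i) ∧ c • b = ∑ i ∈ s, l i • a i) ∨
      ∃ u : ι → R, (∀ i ∈ s, 0 ≤ u ⬝ᵥ a i) ∧ u ⬝ᵥ b < 0 := by
  induction s using Finset.induction_on generalizing a b with
  | empty =>
    by_cases hb : b = 0
    · exact Or.inl ⟨1, one_pos, 0, fun _ => le_rfl, by simp [hb]⟩
    · exact Or.inr ⟨-b, by simp, by simpa [neg_dotProduct] using dotProduct_self_pos hb⟩
  | insert t s ht ih =>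
    rcases ih a b with ⟨c, hc, l, hl, hb⟩ | ⟨u, hu, hub⟩
    · refine Or.inl ⟨c, hc, Function.update l t 0, fun i => ?_, ?_⟩
      · rcases eq_or_ne i t with rfl | hi <;> simp [*]
      · rw [hb, sum_insert_update_smul ht, zero_smul, zero_add]
    rcases le_or_gt 0 (u ⬝ᵥ a t) with hut | hut
    · exact Or.inr ⟨u, forall_mem_insert _ _ _ |>.2 ⟨hut, hu⟩, hub⟩
    -- `u` separates `b` from `a '' s` but not from `a t`: project along `a t` onto `ker u`
    rcases ih (fun i => kerProj u (a t) (a i)) (kerProj u (a t) b) with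
      ⟨c, hc, l, hl, hb⟩ | ⟨w, hw, hwb⟩
    · set μ := ∑ i ∈ s, l i * u ⬝ᵥ a i - c * u ⬝ᵥ b
      have hμ : 0 ≤ μ := sub_nonneg.2 <| (mul_neg_of_pos_of_neg hc hub).le.trans <|
        sum_nonneg fun i hi => mul_nonneg (hl i) (hu i hi)
      have key : (-(u ⬝ᵥ a t) * c) • b = μ • a t + ∑ i ∈ s, (-(u ⬝ᵥ a t) * l i) • a i := by
        rw [sum_smul_kerProj] at hb
        simp only [kerProj, mul_smul, ← smul_sum] at hb ⊢
        linear_combination (norm := module) hb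
      refine Or.inl ⟨_, mul_pos (neg_pos.2 hut) hc,
        Function.update (fun i => -(u ⬝ᵥ a t) * l i) t μ, fun i => ?_, ?_⟩
      · rcases eq_or_ne i t with rfl | hi
        · simpa using hμ
        · simpa [hi] using mul_nonneg (neg_nonneg.2 hut.le) (hl i)
      · rw [key, sum_insert_update_smul ht]
    · refine Or.inr ⟨(w ⬝ᵥ a t) • u - (u ⬝ᵥ a t) • w, ?_, ?_⟩
      · refine forall_mem_insert _ _ _ |>.2 ⟨?_, fun i hi => ?_⟩
        · rw [← dotProduct_kerProj, kerProj_self, dotProduct_zero]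
        · rw [← dotProduct_kerProj]; exact hw i hi
      · rw [← dotProduct_kerProj]; exact hwb

theorem exists_forall_dotProduct_pos [Fintype κ] (a : κ → ι → R)
    (h : ∀ l : κ → R, (∀ i, 0 ≤ l i) → ∑ i, l i • a i = 0 → l = 0) :
    ∃ u : ι → R, ∀ i, 0 < u ⬝ᵥ a i := by
  classical
  -- homogenize: a separator `U` of `b` from the `a' j` gives `u ⬝ᵥ a j ≥ -U none > 0`
  let a' : κ → Option ι → R := fun j o => o.elim 1 (a j)
  let b : Option ι → R := fun o => o.elim 1 0
  rcases exists_smul_eq_sum_or_exists_dotProduct_neg univ a' b with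
    ⟨c, hc, l, hl, hb⟩ | ⟨U, hU, hUb⟩
  · have hsum : ∑ i, l i • a i = 0 := funext fun k => by
      simpa [a', b, Finset.sum_apply] using (congrFun hb (some k)).symm
    have hc' : c = ∑ i, l i := by simpa [a', b, Finset.sum_apply] using congrFun hb none
    simp [h l hl hsum, hc.ne'] at hc'
  · refine ⟨fun i => U (some i), fun j => ?_⟩
    have hUj := hU j (mem_univ j)
    simp only [a', b, dotProduct, Fintype.sum_option, Option.elim] at hUj hUb
    simp only [mul_one, Pi.zero_apply, mul_zero, sum_const_zero, add_zero] at hUj hUb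
    change 0 < ∑ x, U (some x) * a j x
    linarith

namespace IsPositiveCone

variable {A : Type*} [AddCommGroup A] {P : Set A}

theorem nsmul_mem (hP : IsPositiveCone P) {x : A} (hx : x ∈ P) :
    ∀ {m : ℕ}, 0 < m → m • x ∈ P
  | 1, _ => by rwa [one_nsmul]
  | m + 2, _ => by rw [succ_nsmul]; exact hP.2.1 _ (hP.nsmul_mem hx m.succ_pos) _ hx

theorem zsmul_mem (hP : IsPositiveCone P) {x : A} (hx : x ∈ P) {m : ℤ} (hm : 0 < m) :
    m • x ∈ P := by
  lift m to ℕ using hm.le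
  rw [natCast_zsmul]
  exact hP.nsmul_mem hx (by exact_mod_cast hm)

theorem sum_mem (hP : IsPositiveCone P) {κ : Type*} {s : Finset κ} (hs : s.Nonempty)
    {f : κ → A} (hf : ∀ i ∈ s, f i ∈ P) : ∑ i ∈ s, f i ∈ P :=
  sum_induction_nonempty f (· ∈ P) (fun a b ha hb => hP.2.1 a ha b hb) hs hf

theorem eq_zero_of_sum_zsmul_eq_zero (hP : IsPositiveCone P) {κ : Type*} [Fintype κ]
    {a : κ → A} (ha : ∀ i, a i ∈ P) {l : κ → ℤ} (hl : ∀ i, 0 ≤ l i)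
    (hsum : ∑ i, l i • a i = 0) : l = 0 := by
  classical
  by_contra hne
  obtain ⟨j, hj⟩ := Function.ne_iff.mp hne
  have hsupp : ∑ i with l i ≠ 0, l i • a i = ∑ i, l i • a i :=
    sum_filter_of_ne fun i _ hi hli => hi (by rw [hli, zero_smul])
  refine hP.1 (hsum ▸ hsupp ▸ hP.sum_mem ⟨j, by simpa using hj⟩ fun i hi => ?_)
  exact hP.zsmul_mem (ha i) ((hl i).lt_of_ne' (mem_filter.mp hi).2)

end IsPositiveCone

section LexCone

variable {A B : Type*} [AddCommGroup A] [AddCommGroup B] [LinearOrder B]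

def lexCone (φ : A →+ B) (P : Set A) : Set A := {x | 0 < φ x ∨ φ x = 0 ∧ x ∈ P}

variable {φ : A →+ B} {P : Set A}

theorem isPositiveCone_lexCone [IsOrderedAddMonoid B] (hP : IsPositiveCone P) :
    IsPositiveCone (lexCone φ P) := by
  refine ⟨?_, ?_, fun a ha => xor_def.mpr ?_⟩
  · rintro (h | ⟨-, h⟩)
    · exact (map_zero φ ▸ h).false
    · exact hP.1 h
  · rintro a (ha | ⟨ha, haP⟩) b (hb | ⟨hb, hbP⟩) <;>
      simp only [lexCone, Set.mem_ofPred_eq, map_add]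
    · exact Or.inl (add_pos ha hb)
    · exact Or.inl (by rwa [hb, add_zero])
    · exact Or.inl (by rwa [ha, zero_add])
    · exact Or.inr ⟨by rw [ha, hb, add_zero], hP.2.1 a haP b hbP⟩
  simp only [lexCone, Set.mem_ofPred_eq, map_neg, neg_pos, neg_eq_zero]
  rcases lt_trichotomy (φ a) 0 with h | h | h
  · simp [h, h.ne, h.not_gt]
  · simpa [h] using xor_def.mp (hP.2.2 a ha)
  · simp [h, h.ne', h.not_gt]

theorem subset_lexCone {S : Set A} (hSP : S ⊆ P) (hS : ∀ s ∈ S, 0 ≤ φ s) :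
    S ⊆ lexCone φ P := fun s hs =>
  (hS s hs).lt_or_eq.imp id fun h => ⟨h.symm, hSP hs⟩

theorem lexCone_ne {x : A} (hxP : x ∈ P) (hx : φ x < 0) : lexCone φ P ≠ P := by
  intro h
  rcases h.symm ▸ hxP with h' | ⟨h', -⟩
  · exact hx.not_gt h'
  · exact hx.ne h'

end LexCone

theorem exists_dotProduct_nonneg_and_dotProduct_neg {ι : Type*} [Fintype ι]
    {S : Finset (ι → ℤ)} {v z : ι → ℤ} (hv : ∀ s ∈ S, 0 < v ⬝ᵥ s) (hvz : v ⬝ᵥ z = 0)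
    (hz : z ≠ 0) : ∃ w : ι → ℤ, (∀ s ∈ S, 0 ≤ w ⬝ᵥ s) ∧ w ⬝ᵥ z < 0 := by
  refine ⟨(∑ s ∈ S, |z ⬝ᵥ s|) • v - z, fun s hs => ?_, ?_⟩
  · have hzs : z ⬝ᵥ s ≤ ∑ t ∈ S, |z ⬝ᵥ t| :=
      (le_abs_self _).trans (single_le_sum (fun t _ => abs_nonneg (z ⬝ᵥ t)) hs)
    have hMv : ∑ t ∈ S, |z ⬝ᵥ t| ≤ (∑ t ∈ S, |z ⬝ᵥ t|) * v ⬝ᵥ s :=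
      le_mul_of_one_le_right (sum_nonneg fun t _ => abs_nonneg _) (hv s hs)
    rw [sub_dotProduct, smul_dotProduct, smul_eq_mul, sub_nonneg]
    exact hzs.trans hMv
  · rw [sub_dotProduct, smul_dotProduct, hvz, smul_zero, zero_sub, neg_neg_iff_pos]
    exact dotProduct_self_pos hz

/-- Sikora: for `n ≥ 2`, no ordering of `ℤⁿ` is isolated: given
any positive cone `P` of `ℤⁿ` and any finite subset `S ⊆ P`, there is a
different positive cone `P'` still containing `S`. -/
theorem zn_orderings_not_isolated (n : ℕ) (hn : 2 ≤ n)
    (P : Set (Fin n → ℤ)) (hP : IsPositiveCone P)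
    (S : Finset (Fin n → ℤ)) (hS : ↑S ⊆ P) :
    ∃ P' : Set (Fin n → ℤ), IsPositiveCone P' ∧ P' ≠ P ∧ ↑S ⊆ P' := by
  obtain ⟨v, hv⟩ : ∃ v : Fin n → ℤ, ∀ s : S, 0 < v ⬝ᵥ s :=
    exists_forall_dotProduct_pos _ fun l hl hsum =>
      hP.eq_zero_of_sum_zsmul_eq_zero (fun s => hS s.2) hl hsum
  have : Nontrivial (Fin n) := Fin.nontrivial_iff_two_le.mpr hn
  obtain ⟨z, hz, hzv⟩ := exists_ne_zero_dotProduct_eq_zero v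
  rw [dotProduct_comm] at hzv
  obtain ⟨z, hzP, hz, hvz⟩ : ∃ z ∈ P, z ≠ 0 ∧ v ⬝ᵥ z = 0 := by
    rcases xor_def.mp (hP.2.2 z hz) with ⟨h, -⟩ | ⟨h, -⟩
    · exact ⟨z, h, hz, hzv⟩
    · exact ⟨-z, h, neg_ne_zero.2 hz, by rw [dotProduct_neg, hzv, neg_zero]⟩
  obtain ⟨w, hwS, hwz⟩ :=
    exists_dotProduct_nonneg_and_dotProduct_neg (fun s hs => hv ⟨s, hs⟩) hvz hz
  let φ : (Fin n → ℤ) →+ ℤ := AddMonoidHom.mk' (w ⬝ᵥ ·) (dotProduct_add w)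
  exact ⟨lexCone φ P, isPositiveCone_lexCone hP, lexCone_ne hzP hwz, subset_lexCone hS hwS⟩
end Farkas
end
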